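/- arXiv:1702.05985 — 9 statements merged into one kernel-verified Lean document; each statement's English description precedes it below -/
import Mathlib

section
/- Data-processing inequality with expectations of random variables: let P and Q be two probability measures on a measurable space (Ω, F), and let X : Ω → [0,1] be a measurable function. Then kl(E_P[X], E_Q[X]) ≤ KL(P, Q), where E_P[X] and E_Q[X] are the expectations of X under P and Q respectively. -/
/-!
`kl(p, q)` is the Kullback-Leibler divergence between the Bernoulli laws of parameters `p` and
`q`. The Markov kernel `ω ↦ Ber(X ω)` sends `P` and `Q` to the Bernoulli laws of parameters
`E_P[X]` and `E_Q[X]`, so the claim is the data-processing inequality for Markov kernels.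
-/


open MeasureTheory
open scoped ENNReal Classical

/-- The Kullback-Leibler divergence between two measures, with value `+∞`
when `P` is not absolutely continuous w.r.t. `Q` or when the log-likelihood
ratio is not integrable. -/
noncomputable def KLdiv {Ω : Type*} [MeasurableSpace Ω] (P Q : Measure Ω) : ℝ≥0∞ :=
  if P ≪ Q ∧ Integrable (fun ω => Real.log (P.rnDeriv Q ω).toReal) P
  then ENNReal.ofReal (∫ ω, Real.log (P.rnDeriv Q ω).toReal ∂P)
  else ⊤

/-- The Kullback-Leibler divergence between Bernoulli distributions of
parameters `p` and `q`, as a real number (recall `Real.log 0 = 0` in Mathlib,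
which realizes the conventions `0·log 0 = 0` and `0·log(0/0) = 0`). -/
noncomputable def klBin (p q : ℝ) : ℝ :=
  p * Real.log (p / q) + (1 - p) * Real.log ((1 - p) / (1 - q))

/-- The Kullback-Leibler divergence between Bernoulli distributions of
parameters `p` and `q`, with values in `[0,+∞]`: it is `+∞` exactly when
`q ∈ {0,1}` and `p ≠ q`. -/
noncomputable def klBinE (p q : ℝ) : ℝ≥0∞ :=
  if (q = 0 ∧ p ≠ 0) ∨ (q = 1 ∧ p ≠ 1) then ⊤ else ENNReal.ofReal (klBin p q)

open ProbabilityTheory InformationTheory unitInterval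

lemma KLdiv_eq_klDiv {Ω : Type*} [MeasurableSpace Ω] {μ ν : Measure Ω}
    (h : μ Set.univ = ν Set.univ) : KLdiv μ ν = klDiv μ ν := by
  rw [KLdiv]
  split_ifs with hac
  · rw [klDiv_of_ac_of_integrable hac.1 hac.2, measureReal_def, measureReal_def, h,
      add_sub_cancel_right]
    rfl
  · rw [klDiv_def]
    exact (if_neg hac).symm

section Atoms

variable {α : Type*} [MeasurableSpace α] [MeasurableSingletonClass α] {μ ν : Measure α}

lemma rnDeriv_apply_eq_div [μ.HaveLebesgueDecomposition ν] [SFinite ν] (hμν : μ ≪ ν) {a : α}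
    (h0 : ν {a} ≠ 0) (htop : ν {a} ≠ ∞) : μ.rnDeriv ν a = μ {a} / ν {a} := by
  rw [ENNReal.eq_div_iff h0 htop, mul_comm, ← lintegral_singleton,
    Measure.setLIntegral_rnDeriv hμν]

lemma mul_llr_apply_eq [SigmaFinite μ] [IsFiniteMeasure ν] (hμν : μ ≪ ν) (a : α) :
    μ.real {a} * llr μ ν a = μ.real {a} * Real.log (μ.real {a} / ν.real {a}) := by
  by_cases h0 : ν {a} = 0
  · simp [measureReal_def, hμν h0]
  · rw [llr, rnDeriv_apply_eq_div hμν h0 (measure_ne_top ν _), ENNReal.toReal_div]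
    rfl

end Atoms

section UnitInterval

variable {α : Type*} [MeasurableSpace α] {μ : Measure α} {f : α → I}

lemma ofReal_eq_coe_toNNReal (t : I) : ENNReal.ofReal t = toNNReal t :=
  ENNReal.ofReal_coe_nnreal (p := toNNReal t)

lemma toNNReal_eq_zero_iff {t : I} : toNNReal t = 0 ↔ t = 0 := by
  rw [← NNReal.coe_eq_zero, coe_toNNReal, Set.Icc.coe_eq_zero]

lemma integrable_coe_unitInterval [IsFiniteMeasure μ] (hf : Measurable f) :
    Integrable (fun a ↦ (f a : ℝ)) μ :=
  .of_bound (by fun_prop) 1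
    (.of_forall fun a ↦ by simpa [abs_of_nonneg (f a).2.1] using (f a).2.2)

lemma integral_coe_mem_unitInterval [IsProbabilityMeasure μ] (hf : Measurable f) :
    ∫ a, (f a : ℝ) ∂μ ∈ I := by
  refine ⟨integral_nonneg fun a ↦ (f a).2.1, ?_⟩
  calc ∫ a, (f a : ℝ) ∂μ ≤ ∫ _, (1 : ℝ) ∂μ :=
        integral_mono (integrable_coe_unitInterval hf) (integrable_const 1) fun a ↦ (f a).2.2
    _ = 1 := by simp

lemma lintegral_toNNReal_eq_ofReal_integral [IsFiniteMeasure μ] (hf : Measurable f) :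
    ∫⁻ a, (toNNReal (f a) : ℝ≥0∞) ∂μ = ENNReal.ofReal (∫ a, (f a : ℝ) ∂μ) := by
  simp_rw [ofReal_integral_eq_lintegral_ofReal (integrable_coe_unitInterval hf)
    (.of_forall fun a ↦ (f a).2.1), ofReal_eq_coe_toNNReal]

end UnitInterval

section Bernoulli

variable {Y : Type*} [MeasurableSpace Y]

lemma measurable_bernoulliMeasure (x y : Y) : Measurable fun p : I ↦ Ber(x, y, p) := by
  refine Measure.measurable_of_measurable_coe _ fun s _ ↦ ?_
  simp only [bernoulliMeasure_def, Measure.add_apply, Measure.smul_apply, ENNReal.smul_def,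
    smul_eq_mul]
  fun_prop

noncomputable def bernoulliKernel {α : Type*} [MeasurableSpace α] (x y : Y) {f : α → I}
    (hf : Measurable f) : Kernel α Y :=
  ⟨fun a ↦ Ber(x, y, f a), (measurable_bernoulliMeasure x y).comp hf⟩

instance {α : Type*} [MeasurableSpace α] (x y : Y) {f : α → I} (hf : Measurable f) :
    IsMarkovKernel (bernoulliKernel x y hf) :=
  ⟨fun a ↦ by dsimp [bernoulliKernel]; infer_instance⟩

lemma bernoulliKernel_comp {α : Type*} [MeasurableSpace α] (x y : Y) {f : α → I}
    (hf : Measurable f) (μ : Measure α) [IsProbabilityMeasure μ] {p : I}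
    (hp : (p : ℝ) = ∫ a, (f a : ℝ) ∂μ) : bernoulliKernel x y hf ∘ₘ μ = Ber(x, y, p) := by
  have hmean : ∫⁻ a, (toNNReal (f a) : ℝ≥0∞) ∂μ = toNNReal p := by
    rw [lintegral_toNNReal_eq_ofReal_integral hf, ← hp, ofReal_eq_coe_toNNReal]
  have hmean' : ∫⁻ a, (toNNReal (σ (f a)) : ℝ≥0∞) ∂μ = toNNReal (σ p) := by
    rw [lintegral_toNNReal_eq_ofReal_integral (by fun_prop)]
    simp only [coe_symm_eq]
    rw [integral_sub (integrable_const 1) (integrable_coe_unitInterval hf), ← hp]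
    simp [← coe_symm_eq, ofReal_eq_coe_toNNReal]
  ext s hs
  rw [Measure.bind_apply hs (Kernel.aemeasurable _)]
  simp only [bernoulliKernel, Kernel.coe_mk, bernoulliMeasure_def, Measure.add_apply,
    Measure.smul_apply, ENNReal.smul_def, smul_eq_mul]
  rw [lintegral_add_right _ (by fun_prop), lintegral_mul_const _ (by fun_prop),
    lintegral_mul_const _ (by fun_prop), hmean, hmean']

variable [MeasurableSingletonClass Y] {x y : Y}

lemma bernoulliMeasure_absolutelyContinuous_iff (hxy : x ≠ y) {p q : I} :
    Ber(x, y, p) ≪ Ber(x, y, q) ↔ (q = 0 → p = 0) ∧ (q = 1 → p = 1) := by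
  constructor
  · intro hpq
    refine ⟨fun hq ↦ ?_, fun hq ↦ ?_⟩
    · have := hpq (s := {x}) (by simp [hq, hxy])
      simpa [hxy.symm, toNNReal_eq_zero_iff] using this
    · have := hpq (s := {y}) (by simp [hq, hxy])
      simpa [hxy, toNNReal_eq_zero_iff, symm_eq_zero] using this
  · rintro ⟨h0, h1⟩
    refine Measure.AbsolutelyContinuous.mk fun s hs hqs ↦ ?_
    rw [bernoulliMeasure_apply q hs] at hqs
    rw [bernoulliMeasure_apply p hs]
    split_ifs at hqs ⊢ <;> simp_all [toNNReal_eq_zero_iff, symm_eq_zero]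

lemma integral_llr_bernoulliMeasure (hxy : x ≠ y) {p q : I}
    (hpq : Ber(x, y, p) ≪ Ber(x, y, q)) :
    ∫ z, llr Ber(x, y, p) Ber(x, y, q) z ∂Ber(x, y, p) = klBin p q := by
  have hx := mul_llr_apply_eq hpq x
  have hy := mul_llr_apply_eq hpq y
  simp only [bernoulliMeasure_real_apply_of_mem_of_notMem _ (measurableSet_singleton x)
    rfl hxy.symm, bernoulliMeasure_real_apply_of_notMem_of_mem _ (measurableSet_singleton y)
    hxy rfl] at hx hy
  rw [integral_bernoulliMeasure, smul_eq_mul, smul_eq_mul, hx, hy, klBin]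

lemma klDiv_bernoulliMeasure (hxy : x ≠ y) (p q : I) :
    klDiv Ber(x, y, p) Ber(x, y, q) = klBinE p q := by
  by_cases hpq : Ber(x, y, p) ≪ Ber(x, y, q)
  · have hcond := (bernoulliMeasure_absolutelyContinuous_iff hxy).1 hpq
    rw [klDiv_of_ac_of_integrable hpq (integrable_bernoulliMeasure _ _ _ _),
      integral_llr_bernoulliMeasure hxy hpq, klBinE, if_neg (by simpa using hcond)]
    simp
  · have hcond := mt (bernoulliMeasure_absolutelyContinuous_iff hxy).2 hpq
    refine (klDiv_of_not_ac hpq).trans (if_pos ?_).symm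
    simp only [Set.Icc.coe_eq_zero, Set.Icc.coe_eq_one, ne_eq]
    tauto

end Bernoulli

/-- Data-processing inequality with expectations of `[0,1]`-valued random
variables: `kl(E_P[X], E_Q[X]) ≤ KL(P,Q)`. -/
theorem kl_data_processing_expectation {Ω : Type*} [MeasurableSpace Ω]
    (P Q : Measure Ω) [IsProbabilityMeasure P] [IsProbabilityMeasure Q]
    (X : Ω → ℝ) (hX : Measurable X) (hX01 : ∀ ω, X ω ∈ Set.Icc (0 : ℝ) 1) :
    klBinE (∫ ω, X ω ∂P) (∫ ω, X ω ∂Q) ≤ KLdiv P Q := by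
  have hf : Measurable fun ω ↦ (⟨X ω, hX01 ω⟩ : I) := hX.subtype_mk
  let κ := bernoulliKernel true false hf
  have hκ (μ : Measure Ω) [IsProbabilityMeasure μ] :
      κ ∘ₘ μ = Ber(true, false, ⟨∫ ω, X ω ∂μ, integral_coe_mem_unitInterval hf⟩) :=
    bernoulliKernel_comp _ _ hf μ rfl
  calc klBinE (∫ ω, X ω ∂P) (∫ ω, X ω ∂Q) = klDiv (κ ∘ₘ P) (κ ∘ₘ Q) := by
        rw [hκ, hκ, klDiv_bernoulliMeasure (by simp)]
    _ ≤ klDiv P Q := klDiv_comp_right_le P Q κ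
    _ = KLdiv P Q := (KLdiv_eq_klDiv (by simp)).symm
end

section
/- Fano's inequality for finitely many pairs of distributions and arbitrary events: let N ≥ 1, let P₁,…,P_N and Q₁,…,Q_N be probability measures on a common measurable space (Ω, F), and let A₁,…,A_N be events (not necessarily disjoint). Assume 0 < (1/N)·Σᵢ Qᵢ(Aᵢ) < 1 and that each KL(Pᵢ, Qᵢ) is finite. Then (1/N)·Σᵢ Pᵢ(Aᵢ) ≤ ((1/N)·Σᵢ KL(Pᵢ, Qᵢ) + log 2) / ( − log((1/N)·Σᵢ Qᵢ(Aᵢ)) ). -/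
/-!
For a single pair, Gibbs' inequality for `P` against the exponential tilt of `Q` by
`λ • 𝟙_A` gives `λ P(A) ≤ KL(P, Q) + log (Q(A) (e^λ - 1) + 1)`. Averaging over `i` and using the
concavity of `log` replaces the `Q_i(A_i)` by their mean `q`, and the choice `λ = -log q` turns the
logarithm into `log (2 - q) ≤ log 2`.
-/

open MeasureTheory
open scoped ENNReal Classical

open InformationTheory Real Set

lemma exp_indicator_const {Ω : Type*} (A : Set Ω) (l : ℝ) :
    (fun ω => exp (A.indicator (fun _ => l) ω))
      = fun ω => A.indicator (fun _ => exp l - 1) ω + 1 := by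
  ext ω
  by_cases hω : ω ∈ A <;> simp [hω]

lemma mean_log_le_log_mean {ι : Type*} [Fintype ι] [Nonempty ι] {z : ι → ℝ} (hz : ∀ i, 0 < z i) :
    (1 / Fintype.card ι : ℝ) * ∑ i, log (z i) ≤ log ((1 / Fintype.card ι : ℝ) * ∑ i, z i) := by
  have := strictConcaveOn_log_Ioi.concaveOn.le_map_sum (t := Finset.univ)
    (w := fun _ => (1 / Fintype.card ι : ℝ)) (p := z) (fun _ _ => by positivity)
    (by simp) (fun i _ => hz i)
  simpa only [Finset.mul_sum, smul_eq_mul] using this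

-- `x i * (q⁻¹ - 1) + 1` is `∫ exp (λ • 𝟙_{A_i}) ∂Q_i` at `λ = -log q`, where `x i = Q_i(A_i)`.
lemma mean_log_partition_le_log_two {ι : Type*} [Fintype ι] [Nonempty ι] {x : ι → ℝ}
    (hx : ∀ i, 0 ≤ x i) (hq0 : 0 < (1 / Fintype.card ι : ℝ) * ∑ i, x i)
    (hq1 : (1 / Fintype.card ι : ℝ) * ∑ i, x i < 1) :
    (1 / Fintype.card ι : ℝ) * ∑ i, log (x i * (((1 / Fintype.card ι : ℝ) * ∑ i, x i)⁻¹ - 1) + 1)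
      ≤ log 2 := by
  set q := (1 / Fintype.card ι : ℝ) * ∑ i, x i with hq
  have hZ : ∀ i, 0 < x i * (q⁻¹ - 1) + 1 := fun i => by
    have := (one_le_inv₀ hq0).2 hq1.le
    have := hx i
    positivity
  have mean_Z : (1 / Fintype.card ι : ℝ) * ∑ i, (x i * (q⁻¹ - 1) + 1) = 2 - q := by
    rw [Finset.sum_add_distrib, ← Finset.sum_mul, mul_add, ← mul_assoc, ← hq, Finset.sum_const,
      Finset.card_univ, nsmul_eq_mul, mul_one, one_div_mul_cancel (by positivity), mul_sub,
      mul_inv_cancel₀ hq0.ne']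
    ring
  calc (1 / Fintype.card ι : ℝ) * ∑ i, log (x i * (q⁻¹ - 1) + 1)
      ≤ log (2 - q) := mean_Z ▸ mean_log_le_log_mean hZ
    _ ≤ log 2 := log_le_log (by linarith) (by linarith)

section

variable {Ω : Type*} [MeasurableSpace Ω] {μ ν : Measure Ω}

lemma KLdiv_eq_klDiv_of_measure_univ_eq (h : μ univ = ν univ) : KLdiv μ ν = klDiv μ ν := by
  unfold KLdiv
  split_ifs with hac
  · rw [klDiv_of_ac_of_integrable hac.1 hac.2, measureReal_def, measureReal_def, h,
      add_sub_cancel_right, llr_def]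
  · exact (klDiv_eq_top_iff.2 fun h₁ h₂ => hac ⟨h₁, h₂⟩).symm

variable [IsProbabilityMeasure μ] [IsProbabilityMeasure ν]

/-- The easy half of the Donsker–Varadhan variational formula. -/
lemma integral_sub_log_integral_exp_le_toReal_klDiv (hμν : klDiv μ ν ≠ ∞) {f : Ω → ℝ}
    (hfμ : Integrable f μ) (hfν : Integrable (fun ω => exp (f ω)) ν) :
    ∫ ω, f ω ∂μ - log (∫ ω, exp (f ω) ∂ν) ≤ (klDiv μ ν).toReal := by
  obtain ⟨hac, h_int⟩ := klDiv_ne_top_iff.1 hμν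
  have : IsProbabilityMeasure (ν.tilted f) := isProbabilityMeasure_tilted hfν
  have gibbs : 0 ≤ ∫ ω, llr μ (ν.tilted f) ω ∂μ := by
    rw [← toReal_klDiv_of_measure_eq (hac.trans (absolutelyContinuous_tilted hfν))
      (by simp)]
    exact ENNReal.toReal_nonneg
  rw [integral_llr_tilted_right hac hfμ hfν h_int] at gibbs
  rw [toReal_klDiv_of_measure_eq hac (by simp)]
  linarith

lemma mul_measureReal_le_toReal_klDiv_add_log (hμν : klDiv μ ν ≠ ∞) {A : Set Ω}
    (hA : MeasurableSet A) (l : ℝ) :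
    l * μ.real A ≤ (klDiv μ ν).toReal + log (ν.real A * (exp l - 1) + 1) := by
  have hexp_int : Integrable (fun ω => A.indicator (fun _ => exp l - 1) ω + 1) ν :=
    ((integrable_const _).indicator hA).add (integrable_const 1)
  have h := integral_sub_log_integral_exp_le_toReal_klDiv hμν
    ((integrable_const l).indicator hA) (exp_indicator_const A l ▸ hexp_int)
  rw [exp_indicator_const, integral_add ((integrable_const _).indicator hA) (integrable_const _),
    integral_indicator_const _ hA, integral_indicator_const _ hA, integral_const, probReal_univ,
    smul_eq_mul, smul_eq_mul, one_smul] at h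
  linarith

end

/-- Fano's inequality for finitely many pairs of distributions and arbitrary
(not necessarily disjoint) events. -/
theorem fano_finite_events {Ω : Type*} [MeasurableSpace Ω] (N : ℕ) (hN : 1 ≤ N)
    (P Q : Fin N → Measure Ω)
    [∀ i, IsProbabilityMeasure (P i)] [∀ i, IsProbabilityMeasure (Q i)]
    (A : Fin N → Set Ω) (hA : ∀ i, MeasurableSet (A i))
    (hKL : ∀ i, KLdiv (P i) (Q i) ≠ ⊤)
    (hq0 : 0 < (1 / N : ℝ) * ∑ i, (Q i (A i)).toReal)
    (hq1 : (1 / N : ℝ) * ∑ i, (Q i (A i)).toReal < 1) :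
    (1 / N : ℝ) * ∑ i, (P i (A i)).toReal ≤
      ((1 / N : ℝ) * ∑ i, (KLdiv (P i) (Q i)).toReal + Real.log 2) /
        (- Real.log ((1 / N : ℝ) * ∑ i, (Q i (A i)).toReal)) := by
  have : Nonempty (Fin N) := Fin.pos_iff_nonempty.mp hN
  have hKLdiv : ∀ i, KLdiv (P i) (Q i) = klDiv (P i) (Q i) :=
    fun i => KLdiv_eq_klDiv_of_measure_univ_eq (by simp)
  simp only [hKLdiv] at hKL ⊢
  set q := (1 / N : ℝ) * ∑ i, (Q i (A i)).toReal
  have hl : 0 < -log q := neg_pos.2 (log_neg hq0 hq1)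
  have per_index : ∀ i, -log q * (P i (A i)).toReal
      ≤ (klDiv (P i) (Q i)).toReal + log ((Q i (A i)).toReal * (q⁻¹ - 1) + 1) := fun i => by
    have := mul_measureReal_le_toReal_klDiv_add_log (hKL i) (hA i) (-log q)
    rwa [exp_neg, exp_log hq0] at this
  have partition := mean_log_partition_le_log_two (x := fun i => (Q i (A i)).toReal)
    (fun _ => ENNReal.toReal_nonneg) (by simpa only [Fintype.card_fin] using hq0)
    (by simpa only [Fintype.card_fin] using hq1)
  simp only [Fintype.card_fin] at partition
  rw [le_div_iff₀ hl]
  calc (1 / N : ℝ) * (∑ i, (P i (A i)).toReal) * -log q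
      = (1 / N : ℝ) * ∑ i, -log q * (P i (A i)).toReal := by
        rw [mul_assoc, mul_comm (∑ _, _), Finset.mul_sum]
    _ ≤ (1 / N : ℝ) * ∑ i, ((klDiv (P i) (Q i)).toReal
          + log ((Q i (A i)).toReal * (q⁻¹ - 1) + 1)) := by
        gcongr with i; exact per_index i
    _ ≤ (1 / N : ℝ) * ∑ i, (klDiv (P i) (Q i)).toReal + log 2 := by
        rw [Finset.sum_add_distrib, mul_add]
        exact add_le_add le_rfl partition
end

section
/- Fano-type inequality for the chi-square divergence: let N ≥ 1, let P₁,…,P_N and Q₁,…,Q_N be probability measures on a common measurable space (Ω, F) with Pᵢ ≪ Qᵢ and dPᵢ/dQᵢ square-integrable with respect to Qᵢ for each i, and let A₁,…,A_N be events (not necessarily disjoint). If 0 < (1/N)·Σᵢ Qᵢ(Aᵢ) < 1, then (1/N)·Σᵢ Pᵢ(Aᵢ) ≤ (1/N)·Σᵢ Qᵢ(Aᵢ) + sqrt( (1/N)·Σᵢ Qᵢ(Aᵢ) ) · sqrt( (1/N)·Σᵢ χ²(Pᵢ, Qᵢ) ). -/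
open MeasureTheory
open scoped ENNReal Classical

/-- The chi-square divergence `χ²(P,Q) = ∫ (dP/dQ)² dQ − 1`, for `P ≪ Q` with
square-integrable density. -/
noncomputable def chiSq {Ω : Type*} [MeasurableSpace Ω] (P Q : Measure Ω) : ℝ :=
  (∫ ω, ((P.rnDeriv Q ω).toReal) ^ 2 ∂Q) - 1

/-! The per-event bound is Cauchy–Schwarz in `L²(Q)`: `P(A) − Q(A) = ∫_A (dP/dQ − 1) dQ` and
`∫ (dP/dQ − 1)² dQ = χ²(P,Q)`. Averaging over `i` costs one more (discrete) Cauchy–Schwarz. -/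

theorem setIntegral_le_sqrt_measureReal_mul_sqrt_integral_sq {α : Type*} [MeasurableSpace α]
    {μ : Measure α} {g : α → ℝ} (hg : MemLp g 2 μ) {s : Set α} (hs : μ s ≠ ∞) :
    ∫ x in s, g x ∂μ ≤ √(μ.real s) * √(∫ x, g x ^ 2 ∂μ) := by
  have : Fact (μ s < ∞) := ⟨hs.lt_top⟩
  have hg_sq : Integrable (fun x => g x ^ 2) μ := (memLp_two_iff_integrable_sq hg.1).1 hg
  have hg_int : Integrable g (μ.restrict s) := (hg.restrict s).integrable one_le_two
  have hpq : (2 : ℝ).HolderConjugate 2 := .two_two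
  have holder := integral_mul_le_Lp_mul_Lq_of_nonneg (μ := μ.restrict s) hpq
    (f := fun _ => (1 : ℝ)) (g := fun x => |g x|) (.of_forall fun _ => zero_le_one)
    (.of_forall fun _ => abs_nonneg _) (by simpa using memLp_const 1)
    (by rw [ENNReal.ofReal_ofNat]; exact (hg.restrict s).abs)
  simp only [one_mul, Real.rpow_two, sq_abs, setIntegral_const, smul_eq_mul, one_pow,
    mul_one, ← Real.sqrt_eq_rpow] at holder
  calc ∫ x in s, g x ∂μ ≤ ∫ x in s, |g x| ∂μ :=
        integral_mono hg_int hg_int.abs fun x => le_abs_self (g x)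
    _ ≤ √(μ.real s) * √(∫ x in s, g x ^ 2 ∂μ) := holder
    _ ≤ √(μ.real s) * √(∫ x, g x ^ 2 ∂μ) := by
        gcongr
        exacts [.of_forall fun x => sq_nonneg (g x), Measure.restrict_le_self]

section ChiSquare

variable {Ω : Type*} [MeasurableSpace Ω] {P Q : Measure Ω} [IsProbabilityMeasure P]
  [IsProbabilityMeasure Q]

theorem chiSq_eq_integral_sub_one_sq (hac : P ≪ Q)
    (hsq : Integrable (fun ω => ((P.rnDeriv Q ω).toReal) ^ 2) Q) :
    chiSq P Q = ∫ ω, ((P.rnDeriv Q ω).toReal - 1) ^ 2 ∂Q := by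
  have hf : Integrable (fun ω => (P.rnDeriv Q ω).toReal) Q := Measure.integrable_toReal_rnDeriv
  have hf_int : ∫ ω, (P.rnDeriv Q ω).toReal ∂Q = 1 := by
    simp [Measure.integral_toReal_rnDeriv hac]
  simp only [sub_sq, mul_one, one_pow]
  rw [integral_add (f := fun ω => _ - _) (hsq.sub (hf.const_mul 2)) (integrable_const 1),
    integral_sub hsq (hf.const_mul 2), integral_const_mul, hf_int, chiSq]
  simp only [mul_one, integral_const, probReal_univ, smul_eq_mul]
  ring

theorem chiSq_nonneg (hac : P ≪ Q) (hsq : Integrable (fun ω => ((P.rnDeriv Q ω).toReal) ^ 2) Q) :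
    0 ≤ chiSq P Q := by
  rw [chiSq_eq_integral_sub_one_sq hac hsq]
  exact integral_nonneg fun ω => sq_nonneg _

theorem measureReal_le_add_sqrt_mul_sqrt_chiSq (hac : P ≪ Q)
    (hsq : Integrable (fun ω => ((P.rnDeriv Q ω).toReal) ^ 2) Q) (A : Set Ω) :
    P.real A ≤ Q.real A + √(Q.real A) * √(chiSq P Q) := by
  have hf : Integrable (fun ω => (P.rnDeriv Q ω).toReal) (Q.restrict A) :=
    Measure.integrable_toReal_rnDeriv.restrict
  have h_diff : P.real A - Q.real A = ∫ ω in A, ((P.rnDeriv Q ω).toReal - 1) ∂Q := by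
    rw [integral_sub hf (integrable_const 1), Measure.setIntegral_toReal_rnDeriv hac A]
    simp
  have hf_sub : MemLp (fun ω => (P.rnDeriv Q ω).toReal - 1) 2 Q :=
    ((memLp_two_iff_integrable_sq
      (Measure.measurable_rnDeriv P Q).ennreal_toReal.aestronglyMeasurable).2 hsq).sub
      (memLp_const 1)
  have h_cs := setIntegral_le_sqrt_measureReal_mul_sqrt_integral_sq hf_sub (measure_ne_top Q A)
  rw [← h_diff, ← chiSq_eq_integral_sub_one_sq hac hsq] at h_cs
  linarith

end ChiSquare

theorem Finset.sum_le_sum_add_sqrt_mul_sqrt {ι : Type*} (s : Finset ι) {a b c : ι → ℝ}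
    (hb : ∀ i, 0 ≤ b i) (hc : ∀ i, 0 ≤ c i) (h : ∀ i ∈ s, a i ≤ b i + √(b i) * √(c i)) :
    ∑ i ∈ s, a i ≤ ∑ i ∈ s, b i + √(∑ i ∈ s, b i) * √(∑ i ∈ s, c i) :=
  calc ∑ i ∈ s, a i ≤ ∑ i ∈ s, b i + ∑ i ∈ s, √(b i) * √(c i) :=
        (Finset.sum_le_sum h).trans_eq Finset.sum_add_distrib
    _ ≤ _ := by grw [Real.sum_sqrt_mul_sqrt_le s hb hc]

theorem fano_chiSq_general {Ω : Type*} [MeasurableSpace Ω] (N : ℕ)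
    (P Q : Fin N → Measure Ω)
    [∀ i, IsProbabilityMeasure (P i)] [∀ i, IsProbabilityMeasure (Q i)]
    (hac : ∀ i, P i ≪ Q i)
    (hsq : ∀ i, Integrable (fun ω => (((P i).rnDeriv (Q i) ω).toReal) ^ 2) (Q i))
    (A : Fin N → Set Ω) :
    (1 / N : ℝ) * ∑ i, (P i (A i)).toReal ≤
      (1 / N : ℝ) * ∑ i, (Q i (A i)).toReal +
        Real.sqrt ((1 / N : ℝ) * ∑ i, (Q i (A i)).toReal) *
          Real.sqrt ((1 / N : ℝ) * ∑ i, chiSq (P i) (Q i)) := by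
  have hsum := Finset.univ.sum_le_sum_add_sqrt_mul_sqrt (fun i => measureReal_nonneg)
    (fun i => chiSq_nonneg (hac i) (hsq i))
    (fun i _ => measureReal_le_add_sqrt_mul_sqrt_chiSq (hac i) (hsq i) (A i))
  have hN : (0 : ℝ) ≤ 1 / N := by positivity
  rw [Real.sqrt_mul hN, Real.sqrt_mul hN, mul_mul_mul_comm, Real.mul_self_sqrt hN, ← mul_add]
  exact mul_le_mul_of_nonneg_left hsum hN

/-- Fano-type inequality for the chi-square divergence, with arbitrary
(not necessarily disjoint) events. -/
theorem fano_chiSq {Ω : Type*} [MeasurableSpace Ω] (N : ℕ) (hN : 1 ≤ N)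
    (P Q : Fin N → Measure Ω)
    [∀ i, IsProbabilityMeasure (P i)] [∀ i, IsProbabilityMeasure (Q i)]
    (hac : ∀ i, P i ≪ Q i)
    (hsq : ∀ i, Integrable (fun ω => (((P i).rnDeriv (Q i) ω).toReal) ^ 2) (Q i))
    (A : Fin N → Set Ω) (hA : ∀ i, MeasurableSet (A i))
    (hq0 : 0 < (1 / N : ℝ) * ∑ i, (Q i (A i)).toReal)
    (hq1 : (1 / N : ℝ) * ∑ i, (Q i (A i)).toReal < 1) :
    (1 / N : ℝ) * ∑ i, (P i (A i)).toReal ≤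
      (1 / N : ℝ) * ∑ i, (Q i (A i)).toReal +
        Real.sqrt ((1 / N : ℝ) * ∑ i, (Q i (A i)).toReal) *
          Real.sqrt ((1 / N : ℝ) * ∑ i, chiSq (P i) (Q i)) :=
  fano_chiSq_general N P Q hac hsq A
end

section
/- Fano-type inequality for the Hellinger distance: let N ≥ 1, let P₁,…,P_N and Q₁,…,Q_N be probability measures on a common measurable space (Ω, F), and let A₁,…,A_N be events (not necessarily disjoint). If 0 < (1/N)·Σᵢ Qᵢ(Aᵢ) < 1, then, writing h̄² = (1/N)·Σᵢ H²(Pᵢ, Qᵢ), one has (1/N)·Σᵢ Pᵢ(Aᵢ) ≤ (1/N)·Σᵢ Qᵢ(Aᵢ) + sqrt(h̄²) · sqrt(1 − h̄²/4). -/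
open MeasureTheory
open scoped ENNReal Classical

/-- The squared Hellinger distance `H²(P,Q) = ∫ (√(dP/dμ) − √(dQ/dμ))² dμ`,
computed with the dominating measure `μ = P + Q` (the value does not depend on
the choice of a dominating σ-finite measure). -/
noncomputable def hellingerSq {Ω : Type*} [MeasurableSpace Ω] (P Q : Measure Ω) : ℝ :=
  ∫ ω, (Real.sqrt ((P.rnDeriv (P + Q) ω).toReal)
        - Real.sqrt ((Q.rnDeriv (P + Q) ω).toReal)) ^ 2 ∂(P + Q)

/-!
Let `p, q` be the densities of `P, Q` with respect to `P + Q`. Since `∫ (p - q) = 0`, the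
difference `P(A) - Q(A) = ∫_A (p - q)` is at most `½ ∫ |p - q|`. Writing
`p - q = (√p - √q)(√p + √q)`, Cauchy–Schwarz bounds `∫ |p - q|` by `√(H²) · √(∫ (√p + √q)²)`, and
the parallelogram law gives `∫ (√p + √q)² = 4 - H²`; hence `P(A) - Q(A) ≤ √(H²) · √(1 - H²/4)`.
The bounds survive averaging over `i` by Cauchy–Schwarz for sums:
`∑ √hᵢ · √(1 - hᵢ/4) ≤ √(∑ hᵢ) · √(∑ (1 - hᵢ/4))`.
-/

open Real Finset

section Integrals

variable {Ω : Type*} [MeasurableSpace Ω] {μ : Measure Ω}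

theorem integral_mul_le_sqrt_mul_sqrt {f g : Ω → ℝ} (hf0 : 0 ≤ᵐ[μ] f) (hg0 : 0 ≤ᵐ[μ] g)
    (hf : MemLp f 2 μ) (hg : MemLp g 2 μ) :
    ∫ ω, f ω * g ω ∂μ ≤ √(∫ ω, f ω ^ 2 ∂μ) * √(∫ ω, g ω ^ 2 ∂μ) := by
  rw [← ENNReal.ofReal_ofNat] at hf hg
  have := integral_mul_le_Lp_mul_Lq_of_nonneg HolderConjugate.two_two hf0 hg0 hf hg
  simp only [rpow_two, ← sqrt_eq_rpow] at this
  exact this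

theorem memLp_two_sqrt {p : Ω → ℝ} (hp : 0 ≤ p) (hpi : Integrable p μ) :
    MemLp (fun ω => √(p ω)) 2 μ :=
  (memLp_two_iff_integrable_sq hpi.aemeasurable.sqrt.aestronglyMeasurable).mpr
    (hpi.congr (.of_forall fun ω => (sq_sqrt (hp ω)).symm))

variable {p q : Ω → ℝ}

theorem integral_sqrt_add_sqrt_sq (hp : 0 ≤ p) (hq : 0 ≤ q)
    (hpi : Integrable p μ) (hqi : Integrable q μ) :
    ∫ ω, (√(p ω) + √(q ω)) ^ 2 ∂μ =
      2 * ∫ ω, p ω ∂μ + 2 * ∫ ω, q ω ∂μ - ∫ ω, (√(p ω) - √(q ω)) ^ 2 ∂μ := by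
  have hsp := memLp_two_sqrt hp hpi
  have hsq := memLp_two_sqrt hq hqi
  have hadd : Integrable (fun ω => (√(p ω) + √(q ω)) ^ 2) μ := (hsp.add hsq).integrable_sq
  have hsub : Integrable (fun ω => (√(p ω) - √(q ω)) ^ 2) μ := (hsp.sub hsq).integrable_sq
  rw [eq_sub_iff_add_eq, ← integral_add hadd hsub,
    ← integral_const_mul, ← integral_const_mul, ← integral_add (hpi.const_mul 2) (hqi.const_mul 2)]
  refine integral_congr_ae (.of_forall fun ω => ?_)
  linear_combination 2 * sq_sqrt (hp ω) + 2 * sq_sqrt (hq ω)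

theorem integral_abs_sub_le_sqrt_mul_sqrt (hp : 0 ≤ p) (hq : 0 ≤ q)
    (hpi : Integrable p μ) (hqi : Integrable q μ) :
    ∫ ω, |p ω - q ω| ∂μ ≤
      √(∫ ω, (√(p ω) - √(q ω)) ^ 2 ∂μ) * √(∫ ω, (√(p ω) + √(q ω)) ^ 2 ∂μ) := by
  have hfactor : ∀ ω, |p ω - q ω| = |√(p ω) - √(q ω)| * (√(p ω) + √(q ω)) := fun ω => by
    rw [← abs_of_nonneg (by positivity : 0 ≤ √(p ω) + √(q ω)), ← abs_mul]
    congr 1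
    linear_combination sq_sqrt (hq ω) - sq_sqrt (hp ω)
  have hsp := memLp_two_sqrt hp hpi
  have hsq := memLp_two_sqrt hq hqi
  simp_rw [hfactor, ← sq_abs (√(p _) - √(q _))]
  exact integral_mul_le_sqrt_mul_sqrt (.of_forall fun _ => abs_nonneg _)
    (.of_forall fun _ => by positivity) (hsp.sub hsq).abs (hsp.add hsq)

theorem setIntegral_le_half_integral_abs {f : Ω → ℝ} {s : Set Ω} (hs : MeasurableSet s)
    (hf : Integrable f μ) (hf0 : ∫ ω, f ω ∂μ = 0) :
    ∫ ω in s, f ω ∂μ ≤ (∫ ω, |f ω| ∂μ) / 2 := by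
  have hsplit := integral_add_compl hs hf
  have hsplit_abs := integral_add_compl hs hf.abs
  have hle : ∫ ω in s, f ω ∂μ ≤ ∫ ω in s, |f ω| ∂μ :=
    setIntegral_mono hf.integrableOn hf.abs.integrableOn fun ω => le_abs_self _
  have hle_compl : ∫ ω in sᶜ, -f ω ∂μ ≤ ∫ ω in sᶜ, |f ω| ∂μ :=
    setIntegral_mono hf.neg.integrableOn hf.abs.integrableOn fun ω => neg_le_abs _
  rw [integral_neg] at hle_compl
  linarith

end Integrals

theorem inv_card_mul_sum_sqrt_mul_sqrt_le {ι : Type*} (s : Finset ι) (h : ι → ℝ)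
    (h0 : ∀ i, 0 ≤ h i) (h4 : ∀ i, h i ≤ 4) :
    (1 / #s : ℝ) * ∑ i ∈ s, √(h i) * √(1 - h i / 4) ≤
      √((1 / #s : ℝ) * ∑ i ∈ s, h i) * √(1 - ((1 / #s : ℝ) * ∑ i ∈ s, h i) / 4) := by
  rcases s.eq_empty_or_nonempty with rfl | hs
  · simp
  have hn : (#s : ℝ) ≠ 0 := by exact_mod_cast hs.card_pos.ne'
  have hinv : (0 : ℝ) ≤ 1 / #s := by positivity
  have hmean : 1 - ((1 / #s : ℝ) * ∑ i ∈ s, h i) / 4 = (1 / #s : ℝ) * ∑ i ∈ s, (1 - h i / 4) := by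
    rw [sum_sub_distrib, ← sum_div, sum_const, nsmul_one]
    field_simp
  calc (1 / #s : ℝ) * ∑ i ∈ s, √(h i) * √(1 - h i / 4)
      ≤ (1 / #s : ℝ) * (√(∑ i ∈ s, h i) * √(∑ i ∈ s, (1 - h i / 4))) := by
        gcongr
        exact sum_sqrt_mul_sqrt_le s h0 fun i => by linarith [h4 i]
    _ = √(1 / #s : ℝ) * √(1 / #s : ℝ) * (√(∑ i ∈ s, h i) * √(∑ i ∈ s, (1 - h i / 4))) := by
        rw [mul_self_sqrt hinv]
    _ = _ := by
        rw [hmean, sqrt_mul hinv, sqrt_mul hinv]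
        ring

section Hellinger

variable {Ω : Type*} [MeasurableSpace Ω] (P Q : Measure Ω)

theorem hellingerSq_nonneg : 0 ≤ hellingerSq P Q :=
  integral_nonneg fun _ => sq_nonneg _

variable [IsProbabilityMeasure P] [IsProbabilityMeasure Q]

theorem integral_sqrt_rnDeriv_add_sqrt_rnDeriv_sq :
    ∫ ω, (√(P.rnDeriv (P + Q) ω).toReal + √(Q.rnDeriv (P + Q) ω).toReal) ^ 2 ∂(P + Q) =
      4 - hellingerSq P Q := by
  rw [integral_sqrt_add_sqrt_sq (fun _ => ENNReal.toReal_nonneg) (fun _ => ENNReal.toReal_nonneg)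
      Measure.integrable_toReal_rnDeriv Measure.integrable_toReal_rnDeriv,
    Measure.integral_toReal_rnDeriv (Measure.AbsolutelyContinuous.rfl.add_right Q),
    Measure.integral_toReal_rnDeriv (Measure.AbsolutelyContinuous.rfl.add_right' P),
    probReal_univ, probReal_univ, hellingerSq]
  ring

theorem hellingerSq_le_two : hellingerSq P Q ≤ 2 := by
  have hsp := memLp_two_sqrt (fun ω => ENNReal.toReal_nonneg (a := P.rnDeriv (P + Q) ω))
    Measure.integrable_toReal_rnDeriv
  have hsq := memLp_two_sqrt (fun ω => ENNReal.toReal_nonneg (a := Q.rnDeriv (P + Q) ω))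
    Measure.integrable_toReal_rnDeriv
  have hle : hellingerSq P Q ≤
      ∫ ω, (√(P.rnDeriv (P + Q) ω).toReal + √(Q.rnDeriv (P + Q) ω).toReal) ^ 2 ∂(P + Q) :=
    integral_mono (hsp.sub hsq).integrable_sq (hsp.add hsq).integrable_sq fun ω => by
      nlinarith [mul_nonneg (sqrt_nonneg (P.rnDeriv (P + Q) ω).toReal)
        (sqrt_nonneg (Q.rnDeriv (P + Q) ω).toReal)]
  rw [integral_sqrt_rnDeriv_add_sqrt_rnDeriv_sq] at hle
  linarith

theorem toReal_sub_le_sqrt_hellingerSq_of_measurableSet {A : Set Ω} (hA : MeasurableSet A) :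
    (P A).toReal - (Q A).toReal ≤ √(hellingerSq P Q) * √(1 - hellingerSq P Q / 4) := by
  have hPac : P ≪ P + Q := Measure.AbsolutelyContinuous.rfl.add_right Q
  have hQac : Q ≪ P + Q := Measure.AbsolutelyContinuous.rfl.add_right' P
  have hpi : Integrable (fun ω => (P.rnDeriv (P + Q) ω).toReal) (P + Q) :=
    Measure.integrable_toReal_rnDeriv
  have hqi : Integrable (fun ω => (Q.rnDeriv (P + Q) ω).toReal) (P + Q) :=
    Measure.integrable_toReal_rnDeriv
  have hmass :
      ∫ ω, ((P.rnDeriv (P + Q) ω).toReal - (Q.rnDeriv (P + Q) ω).toReal) ∂(P + Q) = 0 := by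
    rw [integral_sub hpi hqi, Measure.integral_toReal_rnDeriv hPac,
      Measure.integral_toReal_rnDeriv hQac]
    simp
  have hH := hellingerSq_le_two P Q
  calc (P A).toReal - (Q A).toReal
      = ∫ ω in A, ((P.rnDeriv (P + Q) ω).toReal - (Q.rnDeriv (P + Q) ω).toReal) ∂(P + Q) := by
        rw [integral_sub hpi.integrableOn hqi.integrableOn,
          Measure.setIntegral_toReal_rnDeriv hPac, Measure.setIntegral_toReal_rnDeriv hQac]
        rfl
    _ ≤ (∫ ω, |(P.rnDeriv (P + Q) ω).toReal - (Q.rnDeriv (P + Q) ω).toReal| ∂(P + Q)) / 2 :=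
        setIntegral_le_half_integral_abs hA (hpi.sub hqi) hmass
    _ ≤ √(hellingerSq P Q) * √(4 - hellingerSq P Q) / 2 := by
        gcongr
        rw [← integral_sqrt_rnDeriv_add_sqrt_rnDeriv_sq]
        exact integral_abs_sub_le_sqrt_mul_sqrt (fun _ => ENNReal.toReal_nonneg)
          (fun _ => ENNReal.toReal_nonneg) hpi hqi
    _ = √(hellingerSq P Q) * √(1 - hellingerSq P Q / 4) := by
        rw [show 4 - hellingerSq P Q = 2 ^ 2 * (1 - hellingerSq P Q / 4) by ring,
          sqrt_mul (by positivity), sqrt_sq zero_le_two]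
        ring

theorem toReal_sub_le_sqrt_hellingerSq (A : Set Ω) :
    (P A).toReal - (Q A).toReal ≤ √(hellingerSq P Q) * √(1 - hellingerSq P Q / 4) := by
  have hPA : (P A).toReal ≤ (P (toMeasurable Q A)).toReal :=
    ENNReal.toReal_mono (measure_ne_top _ _) (measure_mono (subset_toMeasurable Q A))
  have := toReal_sub_le_sqrt_hellingerSq_of_measurableSet P Q (measurableSet_toMeasurable Q A)
  rw [measure_toMeasurable] at this
  linarith

end Hellinger

theorem fano_hellinger_general {Ω : Type*} [MeasurableSpace Ω] (N : ℕ)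
    (P Q : Fin N → Measure Ω)
    [∀ i, IsProbabilityMeasure (P i)] [∀ i, IsProbabilityMeasure (Q i)]
    (A : Fin N → Set Ω) :
    (1 / N : ℝ) * ∑ i, (P i (A i)).toReal ≤
      (1 / N : ℝ) * ∑ i, (Q i (A i)).toReal +
        Real.sqrt ((1 / N : ℝ) * ∑ i, hellingerSq (P i) (Q i)) *
          Real.sqrt (1 - ((1 / N : ℝ) * ∑ i, hellingerSq (P i) (Q i)) / 4) := by
  have hmean := inv_card_mul_sum_sqrt_mul_sqrt_le univ (fun i => hellingerSq (P i) (Q i))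
    (fun i => hellingerSq_nonneg _ _) (fun i => (hellingerSq_le_two _ _).trans (by norm_num))
  rw [card_univ, Fintype.card_fin] at hmean
  calc (1 / N : ℝ) * ∑ i, (P i (A i)).toReal
      = (1 / N : ℝ) * ∑ i, (Q i (A i)).toReal +
          (1 / N : ℝ) * ∑ i, ((P i (A i)).toReal - (Q i (A i)).toReal) := by
        rw [sum_sub_distrib]
        ring
    _ ≤ (1 / N : ℝ) * ∑ i, (Q i (A i)).toReal +
          (1 / N : ℝ) * ∑ i, √(hellingerSq (P i) (Q i)) * √(1 - hellingerSq (P i) (Q i) / 4) := by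
        gcongr with i
        exact toReal_sub_le_sqrt_hellingerSq _ _ _
    _ ≤ _ := by gcongr

/-- Fano-type inequality for the Hellinger distance, with arbitrary
(not necessarily disjoint) events. -/
theorem fano_hellinger {Ω : Type*} [MeasurableSpace Ω] (N : ℕ) (hN : 1 ≤ N)
    (P Q : Fin N → Measure Ω)
    [∀ i, IsProbabilityMeasure (P i)] [∀ i, IsProbabilityMeasure (Q i)]
    (A : Fin N → Set Ω) (hA : ∀ i, MeasurableSet (A i))
    (hq0 : 0 < (1 / N : ℝ) * ∑ i, (Q i (A i)).toReal)
    (hq1 : (1 / N : ℝ) * ∑ i, (Q i (A i)).toReal < 1) :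
    (1 / N : ℝ) * ∑ i, (P i (A i)).toReal ≤
      (1 / N : ℝ) * ∑ i, (Q i (A i)).toReal +
        Real.sqrt ((1 / N : ℝ) * ∑ i, hellingerSq (P i) (Q i)) *
          Real.sqrt (1 - ((1 / N : ℝ) * ∑ i, hellingerSq (P i) (Q i)) / 4) :=
  fano_hellinger_general N P Q A
end

section
/- Lower bound on the binary Kullback-Leibler divergence: for all p ∈ [0,1] and all q ∈ (0,1), kl(p,q) ≥ p·log(1/q) − log(2 − q); equivalently, p ≤ (kl(p,q) + log(2 − q)) / log(1/q). -/
open scoped ENNReal Classical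

lemma klBin_aux (a b : ℝ) (ha : 0 ≤ a) (hb : 0 < b) :
    a - b ≤ a * Real.log (a / b) := by
  rcases eq_or_lt_of_le ha with h | h
  · simp [← h]
    linarith
  · have h1 : 0 < b / a := by positivity
    have h2 := Real.log_le_sub_one_of_pos h1
    have h3 : Real.log (a / b) = - Real.log (b / a) := by
      rw [← Real.log_inv]; congr 1; field_simp
    rw [h3]
    have h4 : b / a - 1 = (b - a) / a := by field_simp
    rw [h4] at h2
    have h5 : a * ((b - a) / a) = b - a := by field_simp
    nlinarith [mul_le_mul_of_nonneg_left h2 (le_of_lt h)]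

/-- Lower bound on the binary Kullback-Leibler divergence:
`kl(p,q) ≥ p·log(1/q) − log(2 − q)`, and the equivalent upper bound on `p`. -/
theorem klBin_lower_bound (p q : ℝ) (hp : p ∈ Set.Icc (0 : ℝ) 1)
    (hq : q ∈ Set.Ioo (0 : ℝ) 1) :
    klBin p q ≥ p * Real.log (1 / q) - Real.log (2 - q) ∧
      p ≤ (klBin p q + Real.log (2 - q)) / Real.log (1 / q) := by
  obtain ⟨hp0, hp1⟩ := hp
  obtain ⟨hq0, hq1⟩ := hq
  have hc : (0:ℝ) < 2 - q := by linarith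
  have h1q : (0:ℝ) < 1 - q := by linarith
  have h1p : (0:ℝ) ≤ 1 - p := by linarith
  -- key log-sum type inequality
  have hA := klBin_aux p (1/(2-q)) hp0 (by positivity)
  have hB := klBin_aux (1-p) ((1-q)/(2-q)) h1p (by positivity)
  have eA : p / (1/(2-q)) = p * (2-q) := by field_simp
  have eB : (1-p) / ((1-q)/(2-q)) = (1-p) * (2-q) / (1-q) := by
    field_simp
  rw [eA] at hA
  rw [eB] at hB
  have hsum : 1/(2-q) + (1-q)/(2-q) = 1 := by field_simp; ring
  have key : 0 ≤ p * Real.log (p*(2-q)) + (1-p) * Real.log ((1-p)*(2-q)/(1-q)) := by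
    linarith
  have e1 : p * Real.log (p*(2-q)) = p * Real.log p + p * Real.log (2-q) := by
    rcases eq_or_lt_of_le hp0 with h | h
    · simp [← h]
    · rw [Real.log_mul h.ne' hc.ne']; ring
  have e2 : (1-p) * Real.log ((1-p)*(2-q)/(1-q))
      = (1-p) * Real.log ((1-p)/(1-q)) + (1-p) * Real.log (2-q) := by
    rcases eq_or_lt_of_le h1p with h | h
    · simp [← h]
    · have : (1-p)*(2-q)/(1-q) = (1-p)/(1-q) * (2-q) := by ring
      rw [this, Real.log_mul (by positivity) hc.ne']; ring
  have e3 : p * Real.log (p / q) = p * Real.log p + p * Real.log (1/q) := by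
    rcases eq_or_lt_of_le hp0 with h | h
    · simp [← h]
    · rw [Real.log_div h.ne' hq0.ne', Real.log_div one_ne_zero hq0.ne',
        Real.log_one]; ring
  have main : klBin p q ≥ p * Real.log (1 / q) - Real.log (2 - q) := by
    unfold klBin
    rw [e3]
    nlinarith [key, e1, e2]
  refine ⟨main, ?_⟩
  have hlog : 0 < Real.log (1 / q) := by
    apply Real.log_pos
    rw [lt_div_iff₀ hq0]; linarith
  rw [le_div_iff₀ hlog]
  linarith [main]
end

section
/- Refined Pinsker's inequality for Bernoulli distributions (Ordentlich–Weinberger): for all p ∈ [0,1] and all q ∈ (0,1), kl(p,q) ≥ φ(q)·(p − q)², where φ(q) = log((1−q)/q)/(1 − 2q) for q ≠ 1/2 and φ(1/2) = 2. Moreover, φ(q)·(p−q)² is the optimal such quadratic lower bound: for each q ∈ (0,1), the infimum over p ∈ [0,1], p ≠ q, of kl(p,q)/(p−q)² equals φ(q) and is attained at p = 1 − q. -/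
open scoped ENNReal Classical

/-- The optimal factor in the refined Pinsker inequality of
Ordentlich and Weinberger: `φ(q) = log((1−q)/q)/(1−2q)`, extended by
continuity as `φ(1/2) = 2`. -/
noncomputable def pinskerPhi (q : ℝ) : ℝ :=
  if q = 1 / 2 then 2 else Real.log ((1 - q) / q) / (1 - 2 * q)

/-!
Put `G_c(p) = log p − log (1 − p) − 2c(p − 1/2)`. The gap `kl(p,q) − c(p − q)²` has derivative
`G_c(p) − G_c(q)` in `p`; `G_c` is odd about `1/2` and convex on `[1/2, 1)`, and `c = φ(q)` is
exactly the value with `G_c(q) = 0`, so that `G_c` vanishes at `q`, `1/2` and `1 − q`.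
Convexity fixes the sign of `G_c` between these zeros: for `q < 1/2` the gap decreases on
`[0, q]`, increases on `[q, 1/2]`, decreases on `[1/2, 1 − q]` and increases on `[1 − q, 1]`,
and it vanishes at both local minima `q` and `1 − q` (at `q = 1/2`, `G_2` is increasing and the
middle intervals collapse). For `q = 1/2` the bound `φ = 2` is
approached but not attained: for `c > 2`, `G_c < 0` just to the right of `1/2`.
-/

open Set Real

section Calculus

variable {f f' : ℝ → ℝ} {a b : ℝ}

lemma monotoneOn_Icc_of_hasDerivAt_nonneg (hf : ContinuousOn f (Icc a b))
    (hd : ∀ x ∈ Ioo a b, HasDerivAt f (f' x) x) (h : ∀ x ∈ Ioo a b, 0 ≤ f' x) :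
    MonotoneOn f (Icc a b) :=
  monotoneOn_of_hasDerivWithinAt_nonneg (convex_Icc a b) hf
    (fun x hx => by rw [interior_Icc] at hx ⊢; exact (hd x hx).hasDerivWithinAt)
    (fun x hx => h x (by rwa [interior_Icc] at hx))

lemma antitoneOn_Icc_of_hasDerivAt_nonpos (hf : ContinuousOn f (Icc a b))
    (hd : ∀ x ∈ Ioo a b, HasDerivAt f (f' x) x) (h : ∀ x ∈ Ioo a b, f' x ≤ 0) :
    AntitoneOn f (Icc a b) :=
  antitoneOn_of_hasDerivWithinAt_nonpos (convex_Icc a b) hf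
    (fun x hx => by rw [interior_Icc] at hx ⊢; exact (hd x hx).hasDerivWithinAt)
    (fun x hx => h x (by rwa [interior_Icc] at hx))

lemma isMinOn_Icc_of_hasDerivAt {m : ℝ} (hm : m ∈ Icc a b) (hf : ContinuousOn f (Icc a b))
    (hd : ∀ x ∈ Ioo a b, HasDerivAt f (f' x) x)
    (hl : ∀ x ∈ Ioo a m, f' x ≤ 0) (hr : ∀ x ∈ Ioo m b, 0 ≤ f' x) :
    IsMinOn f (Icc a b) m := by
  refine isMinOn_iff.2 fun x hx => ?_
  rcases le_total x m with hxm | hmx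
  · exact antitoneOn_Icc_of_hasDerivAt_nonpos (hf.mono (Icc_subset_Icc_right hm.2))
      (fun y hy => hd y ⟨hy.1, hy.2.trans_le hm.2⟩) hl ⟨hx.1, hxm⟩ ⟨hm.1, le_rfl⟩ hxm
  · exact monotoneOn_Icc_of_hasDerivAt_nonneg (hf.mono (Icc_subset_Icc_left hm.1))
      (fun y hy => hd y ⟨hm.1.trans_lt hy.1, hy.2⟩) hr ⟨le_rfl, hm.2⟩ ⟨hmx, hx.2⟩ hmx

lemma ConvexOn.nonpos_of_mem_Icc {s : Set ℝ} (hf : ConvexOn ℝ s f) (ha : a ∈ s) (hb : b ∈ s)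
    (hfa : f a = 0) (hfb : f b = 0) {x : ℝ} (hx : x ∈ Icc a b) : f x ≤ 0 := by
  have := hf.le_on_segment ha hb (by rwa [segment_eq_Icc (hx.1.trans hx.2)])
  rwa [hfa, hfb, max_self] at this

lemma ConvexOn.nonneg_of_le {s : Set ℝ} (hf : ConvexOn ℝ s f) (ha : a ∈ s) (hab : a < b)
    (hfa : f a = 0) (hfb : f b = 0) {x : ℝ} (hx : x ∈ s) (hbx : b ≤ x) : 0 ≤ f x := by
  rcases hbx.eq_or_lt with rfl | hbx
  · exact hfb.ge
  · have hb : b ∈ openSegment ℝ a x := by rw [openSegment_eq_Ioo (hab.trans hbx)]; exact ⟨hab, hbx⟩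
    simpa [hfb] using hf.le_right_of_left_le ha hx hb (by rw [hfa, hfb])

end Calculus

lemma mul_log_div (x : ℝ) {y : ℝ} (hy : y ≠ 0) : x * log (x / y) = x * log x - x * log y := by
  rcases eq_or_ne x 0 with rfl | hx
  · simp
  · rw [log_div hx hy, mul_sub]

lemma klBin_eq {q : ℝ} (hq : q ∈ Ioo 0 1) (p : ℝ) :
    klBin p q = p * log p + (1 - p) * log (1 - p) - p * log q - (1 - p) * log (1 - q) := by
  rw [klBin, mul_log_div p hq.1.ne', mul_log_div (1 - p) (sub_ne_zero.2 hq.2.ne')]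
  ring

lemma klBin_one_sub_one_sub (p q : ℝ) : klBin (1 - p) (1 - q) = klBin p q := by
  simp only [klBin, sub_sub_cancel]
  ring

lemma one_sub_two_mul_mul_pinskerPhi (q : ℝ) : (1 - 2 * q) * pinskerPhi q = log ((1 - q) / q) := by
  unfold pinskerPhi
  split_ifs with h
  · subst h; norm_num
  · exact mul_div_cancel₀ _ fun h' => h (by linarith)

lemma pinskerPhi_one_sub (q : ℝ) : pinskerPhi (1 - q) = pinskerPhi q := by
  rcases eq_or_ne q (1 / 2) with rfl | hq
  · norm_num
  · have hq' : 1 - 2 * q ≠ 0 := fun h => hq (by linarith)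
    rw [← mul_right_inj' hq', one_sub_two_mul_mul_pinskerPhi, ← neg_inj, ← neg_mul,
      show -(1 - 2 * q) = 1 - 2 * (1 - q) by ring, one_sub_two_mul_mul_pinskerPhi,
      sub_sub_cancel, ← log_inv, inv_div]

lemma klBin_one_sub_self (q : ℝ) : klBin (1 - q) q = pinskerPhi q * (1 - 2 * q) ^ 2 := by
  have h := one_sub_two_mul_mul_pinskerPhi q
  rw [klBin, sub_sub_cancel, ← inv_div (1 - q) q, log_inv]
  linear_combination (1 - 2 * q) * h.symm

lemma klBin_one_sub_div_sq {q : ℝ} (hq : q ≠ 1 / 2) :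
    klBin (1 - q) q / ((1 - q) - q) ^ 2 = pinskerPhi q := by
  have hq' : 1 - 2 * q ≠ 0 := fun h => hq (by linarith)
  rw [klBin_one_sub_self, show (1 - q) - q = 1 - 2 * q by ring]
  exact mul_div_cancel_right₀ _ (pow_ne_zero 2 hq')

noncomputable def pinskerGap (c q p : ℝ) : ℝ := klBin p q - c * (p - q) ^ 2

noncomputable def pinskerGapDeriv (c p : ℝ) : ℝ := log p - log (1 - p) - 2 * c * (p - 1 / 2)

lemma pinskerGap_one_sub (c q p : ℝ) : pinskerGap c (1 - q) (1 - p) = pinskerGap c q p := by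
  rw [pinskerGap, pinskerGap, klBin_one_sub_one_sub]
  ring

lemma pinskerGap_eq (c : ℝ) {q : ℝ} (hq : q ∈ Ioo 0 1) : pinskerGap c q =
    fun p => p * log p + (1 - p) * log (1 - p) - p * log q - (1 - p) * log (1 - q)
      - c * (p - q) ^ 2 := by
  ext p
  rw [pinskerGap, klBin_eq hq]

lemma continuous_pinskerGap (c : ℝ) {q : ℝ} (hq : q ∈ Ioo 0 1) : Continuous (pinskerGap c q) := by
  rw [pinskerGap_eq c hq]
  have := continuous_mul_log
  fun_prop

lemma hasDerivAt_pinskerGap (c : ℝ) {q p : ℝ} (hq : q ∈ Ioo 0 1) (hp : p ∈ Ioo 0 1) :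
    HasDerivAt (pinskerGap c q) (pinskerGapDeriv c p - pinskerGapDeriv c q) p := by
  have hlog : HasDerivAt (fun x => x * log x) (log p + 1) p := hasDerivAt_mul_log hp.1.ne'
  have hlog' : HasDerivAt (fun x => (1 - x) * log (1 - x)) ((log (1 - p) + 1) * -1) p :=
    (hasDerivAt_mul_log (sub_ne_zero.2 hp.2.ne')).comp p ((hasDerivAt_id p).const_sub 1)
  rw [pinskerGap_eq c hq]
  refine ((((hlog.add hlog').sub ((hasDerivAt_id p).mul_const (log q))).sub
    (((hasDerivAt_id p).const_sub 1).mul_const (log (1 - q)))).sub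
    ((((hasDerivAt_id p).sub_const q).pow 2).const_mul c)).congr_deriv ?_
  simp only [pinskerGapDeriv, id]
  ring

lemma pinskerGapDeriv_one_sub (c p : ℝ) : pinskerGapDeriv c (1 - p) = -pinskerGapDeriv c p := by
  simp only [pinskerGapDeriv, sub_sub_cancel]
  ring

lemma pinskerGapDeriv_half (c : ℝ) : pinskerGapDeriv c (1 / 2) = 0 := by
  norm_num [pinskerGapDeriv]

lemma pinskerGapDeriv_pinskerPhi_self {q : ℝ} (hq : q ∈ Ioo 0 1) :
    pinskerGapDeriv (pinskerPhi q) q = 0 := by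
  have h := one_sub_two_mul_mul_pinskerPhi q
  rw [log_div (sub_ne_zero.2 hq.2.ne') hq.1.ne'] at h
  rw [pinskerGapDeriv]
  linear_combination h

lemma hasDerivAt_pinskerGapDeriv (c : ℝ) {p : ℝ} (hp : p ∈ Ioo 0 1) :
    HasDerivAt (pinskerGapDeriv c) (p⁻¹ + (1 - p)⁻¹ - 2 * c) p := by
  have hlog' : HasDerivAt (fun x => log (1 - x)) ((1 - p)⁻¹ * -1) p :=
    (hasDerivAt_log (sub_ne_zero.2 hp.2.ne')).comp p ((hasDerivAt_id p).const_sub 1)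
  refine (((hasDerivAt_log hp.1.ne').sub hlog').sub
    (((hasDerivAt_id p).sub_const (1 / 2)).const_mul (2 * c))).congr_deriv (by ring)

lemma convexOn_pinskerGapDeriv (c : ℝ) : ConvexOn ℝ (Ico (1 / 2) 1) (pinskerGapDeriv c) := by
  have hsub : Ico (1 / 2 : ℝ) 1 ⊆ Ioo 0 1 := fun x hx => ⟨by linarith [hx.1], hx.2⟩
  refine convexOn_of_hasDerivWithinAt2_nonneg (convex_Ico _ _)
    (fun x hx => (hasDerivAt_pinskerGapDeriv c (hsub hx)).continuousAt.continuousWithinAt)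
    (f' := fun x => x⁻¹ + (1 - x)⁻¹ - 2 * c) (f'' := fun x => ((1 - x) ^ 2)⁻¹ - (x ^ 2)⁻¹)
    ?_ ?_ ?_
  all_goals rw [interior_Ico]
  · exact fun x hx =>
      (hasDerivAt_pinskerGapDeriv c (hsub (Ioo_subset_Ico_self hx))).hasDerivWithinAt
  · intro x hx
    have hx' := hsub (Ioo_subset_Ico_self hx)
    have hinv : HasDerivAt (fun y => (1 - y)⁻¹) (-((1 - x) ^ 2)⁻¹ * -1) x :=
      (hasDerivAt_inv (sub_ne_zero.2 hx'.2.ne')).comp x ((hasDerivAt_id x).const_sub 1)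
    exact ((((hasDerivAt_inv hx'.1.ne').add hinv).sub_const (2 * c)).congr_deriv
      (by ring)).hasDerivWithinAt
  · intro x hx
    rw [sub_nonneg]
    exact inv_anti₀ (by nlinarith [hx.2]) (by nlinarith [hx.1])

lemma pinskerGapDeriv_pinskerPhi_nonpos {q p : ℝ} (hq0 : 0 < q) (hq : q ≤ 1 / 2)
    (hp : p ∈ Icc (1 / 2) (1 - q)) : pinskerGapDeriv (pinskerPhi q) p ≤ 0 := by
  rcases hq.eq_or_lt with rfl | hq
  · rw [show p = 1 / 2 by linarith [hp.1, hp.2], pinskerGapDeriv_half]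
  · refine (convexOn_pinskerGapDeriv _).nonpos_of_mem_Icc ⟨le_rfl, by norm_num⟩
      ⟨by linarith, by linarith⟩ (pinskerGapDeriv_half _) ?_ hp
    rw [pinskerGapDeriv_one_sub, pinskerGapDeriv_pinskerPhi_self ⟨hq0, by linarith⟩, neg_zero]

lemma pinskerGapDeriv_pinskerPhi_nonneg {q p : ℝ} (hq0 : 0 < q) (hq : q ≤ 1 / 2)
    (hp : p ∈ Ico (1 - q) 1) : 0 ≤ pinskerGapDeriv (pinskerPhi q) p := by
  rcases hq.eq_or_lt with rfl | hq
  · have hmono : MonotoneOn (pinskerGapDeriv 2) (Icc (1 / 2) p) := by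
      refine monotoneOn_Icc_of_hasDerivAt_nonneg
        (fun x hx => (hasDerivAt_pinskerGapDeriv 2 ⟨by linarith [hx.1], hx.2.trans_lt hp.2⟩
          ).continuousAt.continuousWithinAt)
        (fun x hx => hasDerivAt_pinskerGapDeriv 2 ⟨by linarith [hx.1], hx.2.trans hp.2⟩)
        fun x hx => ?_
      have hx0 : 0 < x := by linarith [hx.1]
      have hx1 : 0 < 1 - x := by linarith [hx.2, hp.2]
      rw [inv_add_inv hx0.ne' hx1.ne', sub_nonneg, le_div_iff₀ (by positivity)]
      nlinarith [sq_nonneg (2 * x - 1)]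
    have hp' : 1 / 2 ≤ p := by linarith [hp.1]
    rw [show pinskerPhi (1 / 2) = 2 from if_pos rfl, ← pinskerGapDeriv_half 2]
    exact hmono ⟨le_rfl, hp'⟩ ⟨hp', le_rfl⟩ hp'
  · refine (convexOn_pinskerGapDeriv _).nonneg_of_le ⟨le_rfl, by norm_num⟩ (by linarith)
      (pinskerGapDeriv_half _) ?_ ⟨by linarith [hp.1], hp.2⟩ hp.1
    rw [pinskerGapDeriv_one_sub, pinskerGapDeriv_pinskerPhi_self ⟨hq0, by linarith⟩, neg_zero]

lemma pinskerGap_pinskerPhi_nonneg_of_le_half {q p : ℝ} (hq0 : 0 < q) (hq : q ≤ 1 / 2)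
    (hp : p ∈ Icc 0 1) : 0 ≤ pinskerGap (pinskerPhi q) q p := by
  have hq' : q ∈ Ioo 0 1 := ⟨hq0, by linarith⟩
  have hd : ∀ x ∈ Ioo 0 1,
      HasDerivAt (pinskerGap (pinskerPhi q) q) (pinskerGapDeriv (pinskerPhi q) x) x :=
    fun x hx => by
      simpa [pinskerGapDeriv_pinskerPhi_self hq'] using
        hasDerivAt_pinskerGap (pinskerPhi q) hq' hx
  have hc := continuous_pinskerGap (pinskerPhi q) hq'
  rcases le_total p (1 / 2) with hp2 | hp2
  · have hmin := isMinOn_Icc_of_hasDerivAt (a := 0) (b := 1 / 2) ⟨hq0.le, hq⟩ hc.continuousOn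
      (fun x hx => hd x ⟨hx.1, by linarith [hx.2]⟩)
      (fun x hx => by
        rw [← neg_neg (pinskerGapDeriv _ x), ← pinskerGapDeriv_one_sub, neg_nonpos]
        exact pinskerGapDeriv_pinskerPhi_nonneg hq0 hq ⟨by linarith [hx.2], by linarith [hx.1]⟩)
      (fun x hx => by
        rw [← neg_neg (pinskerGapDeriv _ x), ← pinskerGapDeriv_one_sub, neg_nonneg]
        exact pinskerGapDeriv_pinskerPhi_nonpos hq0 hq ⟨by linarith [hx.2], by linarith [hx.1]⟩)
    have hq0' : pinskerGap (pinskerPhi q) q q = 0 := by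
      simp [pinskerGap, klBin, div_self hq0.ne', div_self (sub_ne_zero.2 hq'.2.ne')]
    simpa [hq0'] using isMinOn_iff.1 hmin p ⟨hp.1, hp2⟩
  · have hmin := isMinOn_Icc_of_hasDerivAt (a := 1 / 2) (b := 1) ⟨by linarith, by linarith⟩
      hc.continuousOn
      (fun x hx => hd x ⟨by linarith [hx.1], hx.2⟩)
      (fun x hx => pinskerGapDeriv_pinskerPhi_nonpos hq0 hq ⟨hx.1.le, hx.2.le⟩)
      (fun x hx => pinskerGapDeriv_pinskerPhi_nonneg hq0 hq ⟨hx.1.le, hx.2⟩)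
    have hq1 : pinskerGap (pinskerPhi q) q (1 - q) = 0 := by
      rw [pinskerGap, klBin_one_sub_self]
      ring
    simpa [hq1] using isMinOn_iff.1 hmin p ⟨hp2, hp.2⟩

lemma pinskerGap_pinskerPhi_nonneg {q p : ℝ} (hq : q ∈ Ioo 0 1) (hp : p ∈ Icc 0 1) :
    0 ≤ pinskerGap (pinskerPhi q) q p := by
  rcases le_total q (1 / 2) with hq2 | hq2
  · exact pinskerGap_pinskerPhi_nonneg_of_le_half hq.1 hq2 hp
  · rw [← pinskerPhi_one_sub, ← pinskerGap_one_sub]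
    exact pinskerGap_pinskerPhi_nonneg_of_le_half (by linarith [hq.2]) (by linarith)
      ⟨by linarith [hp.2], by linarith [hp.1]⟩

lemma pinskerPhi_mul_sq_le_klBin {p q : ℝ} (hp : p ∈ Icc 0 1) (hq : q ∈ Ioo 0 1) :
    pinskerPhi q * (p - q) ^ 2 ≤ klBin p q :=
  sub_nonneg.1 (pinskerGap_pinskerPhi_nonneg hq hp)

lemma pinskerGapDeriv_nonpos_of_near_half {c ε x : ℝ} (hε : ε < 1 / 2)
    (hc : 1 ≤ 2 * c * (1 / 4 - ε ^ 2)) (hx : x ∈ Icc (1 / 2) (1 / 2 + ε)) :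
    pinskerGapDeriv c x ≤ 0 := by
  have hc0 : 0 ≤ c := by
    have : 0 < 1 / 4 - ε ^ 2 := by nlinarith [hx.1, hx.2]
    nlinarith
  have hsub : Icc (1 / 2) (1 / 2 + ε) ⊆ Ioo 0 1 := fun y hy =>
    ⟨by linarith [hy.1], by linarith [hy.2]⟩
  have hanti : AntitoneOn (pinskerGapDeriv c) (Icc (1 / 2) (1 / 2 + ε)) := by
    refine antitoneOn_Icc_of_hasDerivAt_nonpos
      (fun y hy => (hasDerivAt_pinskerGapDeriv c (hsub hy)).continuousAt.continuousWithinAt)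
      (fun y hy => hasDerivAt_pinskerGapDeriv c (hsub (Ioo_subset_Icc_self hy)))
      fun y hy => ?_
    have hy0 : 0 < y := by linarith [hy.1]
    have hy1 : 0 < 1 - y := by linarith [hy.2]
    have hy2 : (y - 1 / 2) ^ 2 ≤ ε ^ 2 := by nlinarith [hy.1, hy.2]
    rw [inv_add_inv hy0.ne' hy1.ne', sub_nonpos, div_le_iff₀ (by positivity)]
    nlinarith [mul_le_mul_of_nonneg_left hy2 hc0]
  have := hanti ⟨le_rfl, by linarith [hx.1, hx.2]⟩ hx hx.1
  rwa [pinskerGapDeriv_half] at this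

lemma klBin_half_add_le {c ε : ℝ} (hε : ε ∈ Ico 0 (1 / 2)) (hc : 1 ≤ 2 * c * (1 / 4 - ε ^ 2)) :
    klBin (1 / 2 + ε) (1 / 2) ≤ c * ε ^ 2 := by
  have hq : (1 / 2 : ℝ) ∈ Ioo 0 1 := by norm_num
  have hanti : AntitoneOn (pinskerGap c (1 / 2)) (Icc (1 / 2) (1 / 2 + ε)) :=
    antitoneOn_Icc_of_hasDerivAt_nonpos (continuous_pinskerGap c hq).continuousOn
      (fun x hx => hasDerivAt_pinskerGap c hq ⟨by linarith [hx.1], by linarith [hx.2, hε.2]⟩)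
      (fun x hx => by
        rw [pinskerGapDeriv_half, sub_zero]
        exact pinskerGapDeriv_nonpos_of_near_half hε.2 hc (Ioo_subset_Icc_self hx))
  have := hanti ⟨le_rfl, by linarith [hε.1]⟩ ⟨by linarith [hε.1], le_rfl⟩ (by linarith [hε.1])
  have hhalf : pinskerGap c (1 / 2) (1 / 2) = 0 := by norm_num [pinskerGap, klBin]
  rwa [hhalf, pinskerGap, add_sub_cancel_left, sub_nonpos] at this

lemma isGLB_klBin_div_sq {q : ℝ} (hq : q ∈ Ioo 0 1) :
    IsGLB {r : ℝ | ∃ p ∈ Icc (0 : ℝ) 1, p ≠ q ∧ r = klBin p q / (p - q) ^ 2} (pinskerPhi q) := by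
  refine ⟨?_, fun b hb => ?_⟩
  · rintro r ⟨p, hp, hpq, rfl⟩
    rw [le_div_iff₀ (sq_pos_of_ne_zero (sub_ne_zero.2 hpq))]
    exact pinskerPhi_mul_sq_le_klBin hp hq
  rcases eq_or_ne q (1 / 2) with rfl | hq2
  · rw [show pinskerPhi (1 / 2) = 2 from if_pos rfl]
    refine le_of_forall_gt_imp_ge_of_dense fun c hc => ?_
    -- `4cε = c − 2` gives `2c(1/4 − ε) = 1`, and `ε² ≤ ε`
    set ε := (c - 2) / (4 * c) with hε
    have hεc : 4 * c * ε = c - 2 := by rw [hε]; field_simp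
    have hε0 : 0 < ε := div_pos (by linarith) (by linarith)
    have hε1 : ε < 1 / 4 := by nlinarith
    have hb' := hb ⟨1 / 2 + ε, ⟨by linarith, by linarith⟩, by linarith, rfl⟩
    rw [add_sub_cancel_left, le_div_iff₀ (by positivity)] at hb'
    exact le_of_mul_le_mul_right
      (hb'.trans (klBin_half_add_le ⟨hε0.le, by linarith⟩ (by nlinarith))) (by positivity)
  · exact hb ⟨1 - q, ⟨by linarith [hq.2], by linarith [hq.1]⟩, fun h => hq2 (by linarith),
      (klBin_one_sub_div_sq hq2).symm⟩

/-- Refined Pinsker's inequality for Bernoulli distributions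
(Ordentlich–Weinberger): `kl(p,q) ≥ φ(q)·(p−q)²`, and `φ(q)` is the optimal
such factor: the infimum over `p ∈ [0,1]`, `p ≠ q`, of `kl(p,q)/(p−q)²` equals
`φ(q)`, and it is attained at `p = 1 − q`. -/
theorem refined_pinsker_bernoulli :
    (∀ p ∈ Set.Icc (0 : ℝ) 1, ∀ q ∈ Set.Ioo (0 : ℝ) 1,
        klBin p q ≥ pinskerPhi q * (p - q) ^ 2) ∧
      (∀ q ∈ Set.Ioo (0 : ℝ) 1,
        IsGLB {r : ℝ | ∃ p ∈ Set.Icc (0 : ℝ) 1, p ≠ q ∧ r = klBin p q / (p - q) ^ 2}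
          (pinskerPhi q)) ∧
      (∀ q ∈ Set.Ioo (0 : ℝ) 1, q ≠ 1 / 2 →
        klBin (1 - q) q / ((1 - q) - q) ^ 2 = pinskerPhi q) :=
  ⟨fun _ hp _ hq => pinskerPhi_mul_sq_le_klBin hp hq, fun _ hq => isGLB_klBin_div_sq hq,
    fun _ _ hq2 => klBin_one_sub_div_sq hq2⟩
end

section
/- Fano's inequality with N = 1 pair of distributions and a random variable (lower bound on the expectation under the alternative): let P and Q be probability measures on a common measurable space (Ω, F) with KL(P,Q) finite, and let Z : Ω → [0,1] be measurable with E_P[Z] > 0. Then E_Q[Z] ≥ exp( − (KL(P,Q) + log 2) / E_P[Z] ). -/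
open MeasureTheory
open scoped ENNReal Classical

/-!
Donsker–Varadhan: for every test function `f`, `E_P[f] ≤ KL(P,Q) + log E_Q[exp f]`; this is
Gibbs' inequality for `P` against the tilted measure `Q.tilted f`. Take `f = λ Z` with
`λ = -log E_Q[Z]`. As `Z` takes values in `[0, 1]`, convexity of `exp` gives
`E_Q[exp (λ Z)] ≤ 1 + E_Q[Z] (e^λ - 1) = 2 - E_Q[Z] ≤ 2`, so `λ E_P[Z] ≤ KL(P,Q) + log 2`.
-/

open InformationTheory Real Set

section

variable {Ω : Type*} [MeasurableSpace Ω] {μ ν : Measure Ω}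

lemma KLdiv_eq_klDiv_s17 [IsProbabilityMeasure μ] [IsProbabilityMeasure ν] :
    KLdiv μ ν = klDiv μ ν := by
  rw [KLdiv, klDiv_def]
  simp [llr_def]

lemma integral_llr_nonneg [IsProbabilityMeasure μ] [IsProbabilityMeasure ν] (hμν : μ ≪ ν) :
    0 ≤ ∫ x, llr μ ν x ∂μ :=
  toReal_klDiv_of_measure_eq hμν (by simp) ▸ ENNReal.toReal_nonneg

theorem integral_le_integral_llr_add_log_integral_exp [IsProbabilityMeasure μ] [SigmaFinite ν]
    {f : Ω → ℝ} (hμν : μ ≪ ν) (h_int : Integrable (llr μ ν) μ) (hfμ : Integrable f μ)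
    (hfν : Integrable (fun x ↦ exp (f x)) ν) :
    ∫ x, f x ∂μ ≤ ∫ x, llr μ ν x ∂μ + log (∫ x, exp (f x) ∂ν) := by
  have : NeZero ν := ⟨fun hν ↦ IsProbabilityMeasure.ne_zero μ
    (Measure.absolutelyContinuous_zero_iff.mp (hν ▸ hμν))⟩
  have := isProbabilityMeasure_tilted hfν
  have h := integral_llr_nonneg (hμν.trans (absolutelyContinuous_tilted hfν))
  rw [integral_llr_tilted_right hμν hfμ hfν h_int] at h
  linarith

lemma integral_pos_of_absolutelyContinuous {f : Ω → ℝ} (hf : 0 ≤ f) (hfν : Integrable f ν)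
    (hμν : μ ≪ ν) (h : 0 < ∫ x, f x ∂μ) : 0 < ∫ x, f x ∂ν := by
  have hμ := (integral_pos_iff_support_of_nonneg hf (Integrable.of_integral_ne_zero h.ne')).mp h
  rw [integral_pos_iff_support_of_nonneg hf hfν, pos_iff_ne_zero]
  exact fun h0 ↦ hμ.ne' (hμν h0)

lemma exp_mul_le_one_add_mul_exp_sub_one {z : ℝ} (hz : z ∈ Icc (0 : ℝ) 1) (t : ℝ) :
    exp (t * z) ≤ 1 + z * (exp t - 1) := by
  have h := convexOn_exp.2 (mem_univ 0) (mem_univ t) (sub_nonneg.mpr hz.2) hz.1 (by ring)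
  simp only [smul_eq_mul, mul_zero, zero_add, exp_zero] at h
  rw [mul_comm]
  linarith

variable {Z : Ω → ℝ}

lemma integrable_of_forall_mem_Icc [IsFiniteMeasure μ] (hZ : Measurable Z)
    (hZ01 : ∀ x, Z x ∈ Icc (0 : ℝ) 1) : Integrable Z μ :=
  .of_bound hZ.aestronglyMeasurable 1 <| .of_forall fun x ↦ by
    rw [Real.norm_of_nonneg (hZ01 x).1]
    exact (hZ01 x).2

lemma integrable_exp_mul_of_forall_mem_Icc [IsFiniteMeasure μ] (hZ : Measurable Z)
    (hZ01 : ∀ x, Z x ∈ Icc (0 : ℝ) 1) (t : ℝ) : Integrable (fun x ↦ exp (t * Z x)) μ := by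
  refine ((integrable_const 1).add ((integrable_of_forall_mem_Icc hZ hZ01).mul_const
    (exp t - 1))).mono' (hZ.const_mul t).exp.aestronglyMeasurable (.of_forall fun x ↦ ?_)
  rw [Real.norm_of_nonneg (exp_pos _).le]
  exact exp_mul_le_one_add_mul_exp_sub_one (hZ01 x) t

lemma integral_exp_mul_le_of_forall_mem_Icc [IsProbabilityMeasure μ] (hZ : Measurable Z)
    (hZ01 : ∀ x, Z x ∈ Icc (0 : ℝ) 1) (t : ℝ) :
    ∫ x, exp (t * Z x) ∂μ ≤ 1 + (∫ x, Z x ∂μ) * (exp t - 1) := by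
  have hZi : Integrable Z μ := integrable_of_forall_mem_Icc hZ hZ01
  calc ∫ x, exp (t * Z x) ∂μ ≤ ∫ x, (1 + Z x * (exp t - 1)) ∂μ :=
        integral_mono (integrable_exp_mul_of_forall_mem_Icc hZ hZ01 t)
          ((integrable_const 1).add (hZi.mul_const _))
          fun x ↦ exp_mul_le_one_add_mul_exp_sub_one (hZ01 x) t
    _ = 1 + (∫ x, Z x ∂μ) * (exp t - 1) := by
        rw [integral_add (integrable_const 1) (hZi.mul_const _), integral_mul_const]
        simp

end

/-- Fano's inequality with a single pair of distributions and a `[0,1]`-valued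
random variable: `E_Q[Z] ≥ exp(−(KL(P,Q) + log 2)/E_P[Z])`. -/
theorem fano_single_pair {Ω : Type*} [MeasurableSpace Ω]
    (P Q : Measure Ω) [IsProbabilityMeasure P] [IsProbabilityMeasure Q]
    (hKL : KLdiv P Q ≠ ⊤)
    (Z : Ω → ℝ) (hZmeas : Measurable Z) (hZ01 : ∀ ω, Z ω ∈ Set.Icc (0 : ℝ) 1)
    (hEP : 0 < ∫ ω, Z ω ∂P) :
    (∫ ω, Z ω ∂Q) ≥
      Real.exp (-(((KLdiv P Q).toReal + Real.log 2) / ∫ ω, Z ω ∂P)) := by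
  rw [KLdiv_eq_klDiv_s17] at hKL ⊢
  obtain ⟨hPQ, hllr⟩ := klDiv_ne_top_iff.mp hKL
  rw [toReal_klDiv_of_measure_eq hPQ (by simp)]
  set q := ∫ ω, Z ω ∂Q
  have hq : 0 < q := integral_pos_of_absolutelyContinuous (fun ω ↦ (hZ01 ω).1)
    (integrable_of_forall_mem_Icc hZmeas hZ01) hPQ hEP
  have hexp_int := integrable_exp_mul_of_forall_mem_Icc (μ := Q) hZmeas hZ01 (-log q)
  have hDV := integral_le_integral_llr_add_log_integral_exp hPQ hllr
    ((integrable_of_forall_mem_Icc hZmeas hZ01).const_mul (-log q)) hexp_int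
  have hmgf : ∫ ω, exp (-log q * Z ω) ∂Q ≤ 2 := by
    calc ∫ ω, exp (-log q * Z ω) ∂Q ≤ 1 + q * (exp (-log q) - 1) :=
          integral_exp_mul_le_of_forall_mem_Icc hZmeas hZ01 _
      _ = 2 - q := by rw [exp_neg, exp_log hq, mul_sub, mul_inv_cancel₀ hq.ne']; ring
      _ ≤ 2 := by linarith
  have hmain : -log q * ∫ ω, Z ω ∂P ≤ ∫ ω, llr P Q ω ∂P + log 2 := by
    rw [integral_const_mul] at hDV
    linarith [log_le_log (integral_exp_pos hexp_int) hmgf]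
  calc exp (-((∫ ω, llr P Q ω ∂P + log 2) / ∫ ω, Z ω ∂P)) ≤ exp (log q) := by
        rw [exp_le_exp, neg_le, le_div_iff₀ hEP]
        linarith
    _ = q := exp_log hq
end

section
/- Cramér's theorem for Bernoulli distributions: let θ ∈ (0,1) and let x ∈ (θ,1). For each n ≥ 1, let P_θ^{⊗n} denote the n-fold product of the Bernoulli distribution with parameter θ on {0,1}^n, and let S_n(ω) = ω₁ + … + ω_n. Then (1/n)·log P_θ^{⊗n}( S_n > n·x ) converges, as n → +∞, to −kl(x,θ). -/
/-!
Write `P(S_n > n x) = ∑_{k > n x} C(n,k) θ^k (1-θ)^{n-k}`. Changing the parameter from `θ` to `x`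
multiplies the `k`-th term by `exp (n kl(x,θ) + (k - n x) (log (x/θ) - log ((1-x)/(1-θ))))`,
which is at least `exp (n kl(x,θ))` when `k ≥ n x` and `x ≥ θ`; since the terms with parameter `x`
sum to `1`, the tail is at most `exp (-n kl(x,θ))`.
Conversely, for `k = ⌊n x⌋ + 1` the single term with parameter `θ` equals `exp (-n kl(k/n,θ))`
times the term of index `k` for the parameter `k/n`. That term is a mode of `Bin(n, k/n)`, hence
the largest of `n + 1` terms summing to `1`, hence at least `1/(n+1)`. As `k/n → x` and
`log (n+1) / n → 0`, continuity of `kl(·,θ)` closes the squeeze.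
-/

open MeasureTheory
open scoped ENNReal Classical

/-- The Bernoulli distribution with parameter `θ` on `{0,1}` (here `Bool`,
with `true` playing the role of `1`): mass `θ` on `1` and `1 − θ` on `0`. -/
noncomputable def bernoulliMeas (θ : ℝ) : Measure Bool :=
  ENNReal.ofReal θ • Measure.dirac true + ENNReal.ofReal (1 - θ) • Measure.dirac false

open Finset Filter Real
open scoped Topology

noncomputable def binomialWeight (n k : ℕ) (p : ℝ) : ℝ :=
  n.choose k * p ^ k * (1 - p) ^ (n - k)

lemma binomialWeight_nonneg {p : ℝ} (hp0 : 0 ≤ p) (hp1 : p ≤ 1) (n k : ℕ) :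
    0 ≤ binomialWeight n k p := by
  have : 0 ≤ 1 - p := by linarith
  unfold binomialWeight; positivity

lemma sum_binomialWeight (n : ℕ) (p : ℝ) : ∑ k ∈ range (n + 1), binomialWeight n k p = 1 := by
  have h := add_pow p (1 - p) n
  rw [add_sub_cancel, one_pow] at h
  exact (sum_congr rfl fun _ _ => by unfold binomialWeight; ring).trans h.symm

lemma binomialWeight_succ_mul (p : ℝ) {n j : ℕ} (hj : j < n) :
    binomialWeight n (j + 1) p * ((j + 1) * (1 - p)) = binomialWeight n j p * ((n - j) * p) := by
  have hchoose : (n.choose (j + 1) : ℝ) * (j + 1) = n.choose j * (n - j) := by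
    have h := congrArg (Nat.cast (R := ℝ)) (Nat.choose_succ_right_eq n j)
    push_cast [Nat.cast_sub hj.le] at h
    exact h
  have hpow : (1 - p) ^ (n - j) = (1 - p) ^ (n - (j + 1)) * (1 - p) := by
    rw [← pow_succ]; congr 1; omega
  simp only [binomialWeight, hpow, pow_succ]
  linear_combination (p ^ j * p * (1 - p) ^ (n - (j + 1)) * (1 - p)) * hchoose

lemma binomialWeight_le_binomialWeight_div {n k j : ℕ} (hkn : k < n) (hj : j ≤ n) :
    binomialWeight n j (k / n) ≤ binomialWeight n k (k / n) := by
  set p : ℝ := k / n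
  have hn : (0 : ℝ) < n := by exact_mod_cast k.zero_le.trans_lt hkn
  have hp0 : 0 ≤ p := by positivity
  have hp1 : p < 1 := by rw [div_lt_one hn]; exact_mod_cast hkn
  have hpn : p * n = k := div_mul_cancel₀ _ hn.ne'
  have hden (i : ℕ) : 0 < ((i : ℝ) + 1) * (1 - p) := by have := sub_pos.2 hp1; positivity
  have hnonneg (i : ℕ) := binomialWeight_nonneg hp0 hp1.le n i
  -- consecutive weights have ratio `(n - i) p / ((i + 1) (1 - p))`, which is `≥ 1` iff `i < k`
  have hup : MonotoneOn (fun i => binomialWeight n i p) (Set.Iic k) := by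
    refine monotoneOn_of_le_succ Set.ordConnected_Iic fun i _ _ hi => ?_
    simp only [Order.succ_eq_add_one, Set.mem_Iic] at hi ⊢
    have hik : (i : ℝ) + 1 ≤ k := by exact_mod_cast hi
    have hratio : ((i : ℝ) + 1) * (1 - p) ≤ (n - i) * p := by nlinarith
    refine le_of_mul_le_mul_right ?_ (hden i)
    rw [binomialWeight_succ_mul p (by omega)]
    exact mul_le_mul_of_nonneg_left hratio (hnonneg i)
  have hdown : AntitoneOn (fun i => binomialWeight n i p) (Set.Icc k n) := by
    refine antitoneOn_of_succ_le Set.ordConnected_Icc fun i _ hi hi' => ?_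
    simp only [Order.succ_eq_add_one, Set.mem_Icc] at hi hi' ⊢
    have hki : (k : ℝ) ≤ i := by exact_mod_cast hi.1
    have hratio : ((n : ℝ) - i) * p ≤ (i + 1) * (1 - p) := by nlinarith
    refine le_of_mul_le_mul_right ?_ (hden i)
    rw [binomialWeight_succ_mul p (by omega)]
    exact mul_le_mul_of_nonneg_left hratio (hnonneg i)
  rcases le_total j k with hjk | hkj
  · exact hup (Set.mem_Iic.2 hjk) (Set.mem_Iic.2 le_rfl) hjk
  · exact hdown ⟨le_rfl, hkn.le⟩ ⟨hkj, hj⟩ hkj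

lemma one_le_succ_mul_binomialWeight_div {n k : ℕ} (hkn : k < n) :
    1 ≤ (n + 1) * binomialWeight n k (k / n) :=
  calc (1 : ℝ) = ∑ j ∈ range (n + 1), binomialWeight n j (k / n) := (sum_binomialWeight n _).symm
    _ ≤ ∑ _j ∈ range (n + 1), binomialWeight n k (k / n) := sum_le_sum fun j hj =>
        binomialWeight_le_binomialWeight_div hkn (Nat.lt_succ_iff.1 (mem_range.1 hj))
    _ = (n + 1) * binomialWeight n k (k / n) := by simp

lemma binomialWeight_eq_mul_exp {p q : ℝ} (hp0 : 0 < p) (hp1 : p < 1) (hq0 : 0 < q) (hq1 : q < 1)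
    {n k : ℕ} (hk : k ≤ n) :
    binomialWeight n k q = binomialWeight n k p *
      exp (-(n * klBin p q) - (k - n * p) * (log (p / q) - log ((1 - p) / (1 - q)))) := by
  have hpow {r : ℝ} (hr : 0 < r) (m : ℕ) : r ^ m = exp (m * log r) := by
    rw [exp_nat_mul, exp_log hr]
  simp only [binomialWeight, hpow hp0, hpow hq0, hpow (sub_pos.2 hp1), hpow (sub_pos.2 hq1),
    mul_assoc, ← exp_add]
  congr 2
  rw [klBin, log_div hp0.ne' hq0.ne', log_div (sub_pos.2 hp1).ne' (sub_pos.2 hq1).ne',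
    Nat.cast_sub hk]
  ring

lemma binomialWeight_le_exp_mul {θ x : ℝ} (hθ0 : 0 < θ) (hθx : θ ≤ x) (hx1 : x < 1) {n k : ℕ}
    (hkn : k ≤ n) (hk : n * x ≤ k) :
    binomialWeight n k θ ≤ exp (-(n * klBin x θ)) * binomialWeight n k x := by
  have hx0 : 0 < x := hθ0.trans_le hθx
  have hθ1 : θ < 1 := hθx.trans_lt hx1
  rw [binomialWeight_eq_mul_exp hx0 hx1 hθ0 hθ1 hkn, mul_comm (exp _)]
  refine mul_le_mul_of_nonneg_left (exp_le_exp.2 ?_) (binomialWeight_nonneg hx0.le hx1.le n k)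
  have : 0 ≤ log (x / θ) := log_nonneg ((one_le_div hθ0).2 hθx)
  have : log ((1 - x) / (1 - θ)) ≤ 0 :=
    log_nonpos (by have := sub_pos.2 hx1; positivity) ((div_le_one (by linarith)).2 (by linarith))
  nlinarith

lemma exp_neg_mul_klBin_le_succ_mul_binomialWeight {θ : ℝ} (hθ0 : 0 < θ) (hθ1 : θ < 1)
    {n k : ℕ} (hk0 : 0 < k) (hkn : k < n) :
    exp (-(n * klBin (k / n) θ)) ≤ (n + 1) * binomialWeight n k θ := by
  have hn : (0 : ℝ) < n := by exact_mod_cast hk0.trans hkn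
  have hp0 : (0 : ℝ) < k / n := by positivity
  have hp1 : (k : ℝ) / n < 1 := by rw [div_lt_one hn]; exact_mod_cast hkn
  rw [binomialWeight_eq_mul_exp hp0 hp1 hθ0 hθ1 hkn.le, mul_div_cancel₀ _ hn.ne', sub_self,
    zero_mul, sub_zero, ← mul_assoc]
  exact le_mul_of_one_le_left (exp_pos _).le (one_le_succ_mul_binomialWeight_div hkn)

noncomputable def binomialTail (n : ℕ) (θ x : ℝ) : ℝ :=
  ∑ k ∈ range (n + 1) with n * x < (k : ℕ), binomialWeight n k θ

lemma binomialWeight_le_binomialTail {θ x : ℝ} (hθ0 : 0 ≤ θ) (hθ1 : θ ≤ 1) {n k : ℕ}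
    (hkn : k ≤ n) (hk : n * x < k) :
    binomialWeight n k θ ≤ binomialTail n θ x :=
  single_le_sum (fun j _ => binomialWeight_nonneg hθ0 hθ1 n j)
    (mem_filter.2 ⟨mem_range.2 (Nat.lt_succ_of_le hkn), hk⟩)

lemma binomialTail_pos {θ x : ℝ} (hθ0 : 0 < θ) (hθ1 : θ ≤ 1) (hx1 : x < 1) {n : ℕ}
    (hn : 0 < n) : 0 < binomialTail n θ x := by
  have hlast : 0 < binomialWeight n n θ := by simp only [binomialWeight]; simpa using pow_pos hθ0 n
  exact hlast.trans_le <| binomialWeight_le_binomialTail hθ0.le hθ1 le_rfl <|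
    mul_lt_of_lt_one_right (Nat.cast_pos.2 hn) hx1

lemma binomialTail_le_exp {θ x : ℝ} (hθ0 : 0 < θ) (hθx : θ ≤ x) (hx1 : x < 1) (n : ℕ) :
    binomialTail n θ x ≤ exp (-(n * klBin x θ)) := by
  have hx0 : 0 < x := hθ0.trans_le hθx
  calc binomialTail n θ x
      ≤ ∑ k ∈ range (n + 1) with n * x < (k : ℕ), exp (-(n * klBin x θ)) * binomialWeight n k x :=
        sum_le_sum fun k hk => by
          simp only [mem_filter, mem_range] at hk
          exact binomialWeight_le_exp_mul hθ0 hθx hx1 (Nat.lt_succ_iff.1 hk.1) hk.2.le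
    _ ≤ ∑ k ∈ range (n + 1), exp (-(n * klBin x θ)) * binomialWeight n k x :=
        sum_le_sum_of_subset_of_nonneg (filter_subset _ _) fun k _ _ =>
          mul_nonneg (exp_pos _).le (binomialWeight_nonneg hx0.le hx1.le n k)
    _ = exp (-(n * klBin x θ)) := by rw [← mul_sum, sum_binomialWeight, mul_one]

lemma one_div_mul_log_binomialTail_le {θ x : ℝ} (hθ0 : 0 < θ) (hθx : θ ≤ x) (hx1 : x < 1)
    {n : ℕ} (hn : 0 < n) :
    1 / n * log (binomialTail n θ x) ≤ -klBin x θ := by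
  have hT := binomialTail_pos hθ0 (hθx.trans hx1.le) hx1 hn
  have hlog := log_le_log hT (binomialTail_le_exp hθ0 hθx hx1 n)
  rw [log_exp] at hlog
  have hn : (0 : ℝ) < n := Nat.cast_pos.2 hn
  calc 1 / n * log (binomialTail n θ x) ≤ 1 / n * -(n * klBin x θ) := by gcongr
    _ = -klBin x θ := by field_simp

lemma le_one_div_mul_log_binomialTail {θ x : ℝ} (hθ0 : 0 < θ) (hθ1 : θ < 1) {n k : ℕ}
    (hk0 : 0 < k) (hkn : k < n) (hk : n * x < k) :
    -klBin (k / n) θ - log (n + 1) / n ≤ 1 / n * log (binomialTail n θ x) := by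
  have hn : (0 : ℝ) < n := by exact_mod_cast hk0.trans hkn
  have hT := binomialTail_pos hθ0 hθ1.le (by nlinarith [show (k : ℝ) < n by exact_mod_cast hkn])
    (hk0.trans hkn)
  have hbound : exp (-(n * klBin (k / n) θ)) ≤ (n + 1) * binomialTail n θ x :=
    (exp_neg_mul_klBin_le_succ_mul_binomialWeight hθ0 hθ1 hk0 hkn).trans <|
      mul_le_mul_of_nonneg_left (binomialWeight_le_binomialTail hθ0.le hθ1.le hkn.le hk)
        (by positivity)
  have hlog := log_le_log (exp_pos _) hbound
  rw [log_exp, log_mul (by positivity) hT.ne'] at hlog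
  calc -klBin (k / n) θ - log (n + 1) / n
      = 1 / n * (-(n * klBin (k / n) θ) - log (n + 1)) := by field_simp
    _ ≤ 1 / n * log (binomialTail n θ x) := by gcongr; linarith

lemma continuousAt_klBin_left {p q : ℝ} (hp0 : 0 < p) (hp1 : p < 1) (hq0 : 0 < q) (hq1 : q < 1) :
    ContinuousAt (fun r => klBin r q) p := by
  unfold klBin
  have h1 : p / q ≠ 0 := by positivity
  have h2 : (1 - p) / (1 - q) ≠ 0 := div_ne_zero (by linarith) (by linarith)
  fun_prop (disch := assumption)

lemma tendsto_log_succ_div_atTop : Tendsto (fun n : ℕ => log (n + 1) / n) atTop (𝓝 0) := by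
  have h := (tendsto_pow_log_div_mul_add_atTop 1 (-1) 1 one_ne_zero).comp
    (tendsto_atTop_add_const_right _ 1 tendsto_natCast_atTop_atTop)
  exact h.congr fun n => by simp

lemma tendsto_floor_mul_add_one_div {x : ℝ} (hx : 0 ≤ x) :
    Tendsto (fun n : ℕ => ((⌊n * x⌋₊ + 1 : ℕ) : ℝ) / n) atTop (𝓝 x) := by
  have h := ((tendsto_nat_floor_mul_div_atTop hx).comp tendsto_natCast_atTop_atTop).add
    tendsto_one_div_atTop_nhds_zero_nat
  rw [add_zero] at h
  refine h.congr fun n => ?_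
  simp [mul_comm, add_div]

theorem tendsto_log_binomialTail_div {θ x : ℝ} (hθ0 : 0 < θ) (hθx : θ < x) (hx1 : x < 1) :
    Tendsto (fun n : ℕ => 1 / n * log (binomialTail n θ x)) atTop (𝓝 (-klBin x θ)) := by
  have hx0 : 0 < x := hθ0.trans hθx
  have hθ1 : θ < 1 := hθx.trans hx1
  set k : ℕ → ℕ := fun n => ⌊n * x⌋₊ + 1
  have hkx : Tendsto (fun n => (k n : ℝ) / n) atTop (𝓝 x) := tendsto_floor_mul_add_one_div hx0.le
  have hlower : Tendsto (fun n : ℕ => -klBin (k n / n) θ - log (n + 1) / n) atTop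
      (𝓝 (-klBin x θ)) := by
    simpa using ((continuousAt_klBin_left hx0 hx1 hθ0 hθ1).tendsto.comp hkx).neg.sub
      tendsto_log_succ_div_atTop
  have hkn : ∀ᶠ n in atTop, k n < n := by
    filter_upwards [hkx.eventually (gt_mem_nhds hx1), eventually_gt_atTop 0] with n h hn
    exact_mod_cast (div_lt_one (by exact_mod_cast hn : (0 : ℝ) < n)).1 h
  refine tendsto_of_tendsto_of_tendsto_of_le_of_le' hlower tendsto_const_nhds ?_ ?_
  · filter_upwards [hkn] with n hkn
    refine le_one_div_mul_log_binomialTail hθ0 hθ1 (Nat.succ_pos _) hkn ?_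
    simp only [k]
    push_cast
    exact Nat.lt_floor_add_one _
  · filter_upwards [eventually_gt_atTop 0] with n hn
    exact one_div_mul_log_binomialTail_le hθ0 hθx.le hx1 hn

instance (θ : ℝ) : IsFiniteMeasure (bernoulliMeas θ) := by
  constructor
  simp [bernoulliMeas]

lemma bernoulliMeas_singleton (θ : ℝ) (b : Bool) :
    bernoulliMeas θ {b} = ENNReal.ofReal (if b then θ else 1 - θ) := by
  cases b <;> simp [bernoulliMeas]

lemma measureReal_pi_bernoulliMeas_singleton {θ : ℝ} (hθ0 : 0 ≤ θ) (hθ1 : θ ≤ 1) {n : ℕ}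
    (ω : Fin n → Bool) :
    (Measure.pi fun _ : Fin n => bernoulliMeas θ).real {ω}
      = θ ^ #{i | ω i} * (1 - θ) ^ (n - #{i | ω i}) := by
  have hnonneg (b : Bool) : 0 ≤ if b then θ else 1 - θ := by split <;> linarith
  simp only [measureReal_def, Measure.pi_singleton, bernoulliMeas_singleton, ENNReal.toReal_prod,
    ENNReal.toReal_ofReal (hnonneg _)]
  rw [prod_ite, prod_const, prod_const, filter_not, card_sdiff_of_subset (filter_subset _ _)]
  simp

lemma sum_fun_bool_card {M : Type*} [AddCommMonoid M] (n : ℕ) (f : ℕ → M) :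
    ∑ ω : Fin n → Bool, f #{i | ω i} = ∑ k ∈ range (n + 1), n.choose k • f k := by
  let e : (Fin n → Bool) ≃ Finset (Fin n) :=
    { toFun ω := {i | ω i}
      invFun s i := i ∈ s
      left_inv ω := by ext; simp
      right_inv s := by ext; simp }
  calc ∑ ω : Fin n → Bool, f #{i | ω i} = ∑ s : Finset (Fin n), f #s := e.sum_comp (f ·.card)
    _ = ∑ k ∈ range (n + 1), n.choose k • f k := by
      rw [← powerset_univ, sum_powerset_apply_card, card_univ, Fintype.card_fin]

lemma measureReal_pi_bernoulliMeas_card {θ : ℝ} (hθ0 : 0 ≤ θ) (hθ1 : θ ≤ 1) (n : ℕ)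
    (P : ℕ → Prop) [DecidablePred P] :
    (Measure.pi fun _ : Fin n => bernoulliMeas θ).real {ω | P #{i | ω i}}
      = ∑ k ∈ range (n + 1) with P k, binomialWeight n k θ := by
  rw [← coe_filter_univ, ← sum_measureReal_singleton, sum_filter, sum_filter]
  simp only [measureReal_pi_bernoulliMeas_singleton hθ0 hθ1]
  rw [sum_fun_bool_card n fun k => if P k then θ ^ k * (1 - θ) ^ (n - k) else 0]
  refine sum_congr rfl fun k _ => ?_
  split_ifs <;> simp [binomialWeight, mul_assoc]

/-- Cramér's theorem for Bernoulli distributions: for `θ ∈ (0,1)` and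
`x ∈ (θ,1)`, `(1/n)·log P_θ^{⊗n}(S_n > n·x) → −kl(x,θ)` as `n → ∞`, where
`S_n` is the sum of the `n` coordinates. -/
theorem cramer_bernoulli (θ x : ℝ) (hθ : θ ∈ Set.Ioo (0 : ℝ) 1)
    (hx : x ∈ Set.Ioo θ 1) :
    Filter.Tendsto
      (fun n : ℕ =>
        (1 / n : ℝ) *
          Real.log
            ((Measure.pi fun _ : Fin n => bernoulliMeas θ)
              {ω : Fin n → Bool |
                (n : ℝ) * x < ∑ i, (if ω i then (1 : ℝ) else 0)}).toReal)
      Filter.atTop (nhds (-klBin x θ)) := by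
  convert tendsto_log_binomialTail_div hθ.1 hx.1 hx.2 using 4 with n
  simp only [sum_boole, ← measureReal_def]
  exact measureReal_pi_bernoulliMeas_card hθ.1.le hθ.2.le n fun k : ℕ => (n : ℝ) * x < k
end

section
/- Birgé's lemma: let N ≥ 2, let P₁,…,P_N be probability measures on a common measurable space (Ω, F), and let A₁,…,A_N be pairwise disjoint events whose union is Ω. Let c ∈ (0,1) satisfy −(c·log c + (1−c)·log(1−c))/c + log(1−c) = log((N−1)/N) (such a c exists and is unique, and c ≥ 1/2). Then min_{1≤i≤N} Pᵢ(Aᵢ) ≤ max{ c, K̄ / log N }, where K̄ = (1/(N−1))·Σ_{i=2}^{N} KL(Pᵢ, P₁), and where the bound is trivially satisfied if K̄ = +∞. -/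
open MeasureTheory
open scoped ENNReal Classical

/-!
Let `a = min_i Pᵢ(Aᵢ)` and suppose `a > c`. Jensen's inequality for `x log x`, applied to
`dPᵢ/dP₁` on `Aᵢ` and on its complement, bounds `KL(Pᵢ, P₁)` below by the binary divergence
`kl(Pᵢ(Aᵢ), P₁(Aᵢ))`, and hence by `a log (1 / P₁(Aᵢ)) - h(a)`, because the binary entropy `h`
decreases on `[1/2, 1]` and `c > 1/2`. The sets `Aᵢ`, `i ≠ 1`, are disjoint from `A₁`, which has
`P₁`-mass at least `a`, so by AM-GM `∑ᵢ log (1 / P₁(Aᵢ)) ≥ (N - 1) log ((N - 1) / (1 - a))`.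
Finally `x ↦ h(x) / x + log (1 - x)` is decreasing and equals `log ((N - 1) / N)` at `c`, which
turns `a log ((N - 1) / (1 - a)) - h(a)` into at least `a log N`.
-/

open Real Set

noncomputable def binKL (p q : ℝ) : ℝ := p * log (p / q) + (1 - p) * log ((1 - p) / (1 - q))

section BinaryDataProcessing

variable {Ω : Type*} [MeasurableSpace Ω]

lemma mul_log_div_le_setIntegral_llr {P Q : Measure Ω} [IsFiniteMeasure P] [IsFiniteMeasure Q]
    (hPQ : P ≪ Q) (hint : Integrable (llr P Q) P) {B : Set Ω} (hB : MeasurableSet B) :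
    P.real B * log (P.real B / Q.real B) ≤ ∫ x in B, llr P Q x ∂P := by
  rcases eq_or_ne (Q B) 0 with hQB | hQB
  · have hPB : P B = 0 := hPQ hQB
    simp [Measure.real, hPB, Measure.restrict_eq_zero.mpr hPB]
  have hQB_pos : 0 < Q.real B := ENNReal.toReal_pos hQB (measure_ne_top Q B)
  have hJensen := convexOn_mul_log.map_set_average_le continuous_mul_log.continuousOn isClosed_Ici
    hQB (measure_ne_top Q B) (ae_of_all _ fun x => ENNReal.toReal_nonneg)
    Measure.integrable_toReal_rnDeriv.integrableOn
    ((integrable_rnDeriv_mul_log_iff hPQ).2 hint).integrableOn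
    (f := fun x => (P.rnDeriv Q x).toReal)
  have hllr : ∫ x in B, (P.rnDeriv Q x).toReal * log (P.rnDeriv Q x).toReal ∂Q
      = ∫ x in B, llr P Q x ∂P := setIntegral_rnDeriv_smul hPQ hB
  simp only [setAverage_eq, smul_eq_mul, Measure.setIntegral_toReal_rnDeriv hPQ, hllr] at hJensen
  calc P.real B * log (P.real B / Q.real B)
      = Q.real B * ((Q.real B)⁻¹ * P.real B * log ((Q.real B)⁻¹ * P.real B)) := by
        field_simp
    _ ≤ Q.real B * ((Q.real B)⁻¹ * ∫ x in B, llr P Q x ∂P) := by gcongr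
    _ = ∫ x in B, llr P Q x ∂P := by field_simp

lemma binKL_le_integral_llr {P Q : Measure Ω} [IsProbabilityMeasure P] [IsProbabilityMeasure Q]
    (hPQ : P ≪ Q) (hint : Integrable (llr P Q) P) {B : Set Ω} (hB : MeasurableSet B) :
    binKL (P.real B) (Q.real B) ≤ ∫ x, llr P Q x ∂P := by
  have hBc := mul_log_div_le_setIntegral_llr hPQ hint hB.compl
  rw [probReal_compl_eq_one_sub hB, probReal_compl_eq_one_sub hB] at hBc
  rw [binKL, ← integral_add_compl hB hint]
  exact add_le_add (mul_log_div_le_setIntegral_llr hPQ hint hB) hBc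

lemma ofReal_binKL_le_KLdiv (P Q : Measure Ω) [IsProbabilityMeasure P] [IsProbabilityMeasure Q]
    {B : Set Ω} (hB : MeasurableSet B) :
    ENNReal.ofReal (binKL (P.real B) (Q.real B)) ≤ KLdiv P Q := by
  unfold KLdiv
  split_ifs with h
  · exact ENNReal.ofReal_le_ofReal (binKL_le_integral_llr h.1 h.2 hB)
  · exact le_top

lemma KLdiv_eq_top_of_measure_eq_zero {P Q : Measure Ω} {B : Set Ω} (hQ : Q B = 0) (hP : P B ≠ 0) :
    KLdiv P Q = ⊤ :=
  if_neg fun h => hP (h.1 hQ)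

end BinaryDataProcessing

lemma mul_log_inv_sub_binEntropy_le_binKL {a p q : ℝ} (ha : 2⁻¹ ≤ a) (hap : a ≤ p) (hp : p ≤ 1)
    (hq : 0 < q) (hq1 : q ≤ 1) :
    a * log q⁻¹ - binEntropy a ≤ binKL p q := by
  have hH : binEntropy p ≤ binEntropy a :=
    binEntropy_strictAntiOn.antitoneOn ⟨ha, hap.trans hp⟩ ⟨ha.trans hap, hp⟩ hap
  have hlog_q : 0 ≤ log q⁻¹ := log_nonneg (one_le_inv₀ hq |>.2 hq1)
  have hcompl : (1 - p) * log (1 - p) ≤ (1 - p) * log ((1 - p) / (1 - q)) := by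
    rcases hp.eq_or_lt with rfl | hp1
    · simp
    rcases hq1.eq_or_lt with rfl | hq1'
    · simpa using
        mul_nonpos_of_nonneg_of_nonpos (by linarith) (log_nonpos (by linarith) (by linarith))
    gcongr
    exact le_div_self (by linarith) (by linarith) (by linarith)
  calc a * log q⁻¹ - binEntropy a
      ≤ p * log q⁻¹ - binEntropy p := by gcongr
    _ = p * log p + (1 - p) * log (1 - p) + p * log q⁻¹ := by
        rw [binEntropy, log_inv p, log_inv (1 - p)]; ring
    _ ≤ binKL p q := by
        rw [binKL, log_div (by linarith) hq.ne', log_inv]; linarith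

/-- The left-hand side of the equation defining Birgé's constant `c`. -/
noncomputable def birgeFun (x : ℝ) : ℝ := binEntropy x / x + log (1 - x)

lemma hasDerivAt_birgeFun {x : ℝ} (hx : x ∈ Ioo 0 1) :
    HasDerivAt birgeFun (log (1 - x) / x ^ 2 - (1 - x)⁻¹) x := by
  have hx0 : x ≠ 0 := hx.1.ne'
  have hx1 : 1 - x ≠ 0 := by linarith [hx.2]
  have hlog : HasDerivAt (fun y => log (1 - y)) (-(1 - x)⁻¹) x := by
    simpa [div_eq_mul_inv] using ((hasDerivAt_id x).const_sub 1).log hx1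
  refine HasDerivAt.congr_deriv (f := birgeFun)
    (((hasDerivAt_binEntropy hx0 (by linarith [hx.2])).div (hasDerivAt_id' x) hx0).add hlog) ?_
  rw [binEntropy, log_inv, log_inv]
  field_simp
  ring

lemma birgeFun_antitoneOn : AntitoneOn birgeFun (Ioo 0 1) := by
  refine antitoneOn_of_hasDerivWithinAt_nonpos (convex_Ioo 0 1)
    (fun x hx => (hasDerivAt_birgeFun hx).continuousAt.continuousWithinAt)
    (fun x hx => (hasDerivAt_birgeFun (interior_subset hx)).hasDerivWithinAt) fun x hx => ?_
  rw [interior_Ioo] at hx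
  have : log (1 - x) ≤ 0 := log_nonpos (by linarith [hx.2]) (by linarith [hx.1])
  have : 0 < 1 - x := by linarith [hx.2]
  have : log (1 - x) / x ^ 2 ≤ 0 := div_nonpos_of_nonpos_of_nonneg ‹_› (sq_nonneg x)
  have : 0 < (1 - x)⁻¹ := inv_pos.2 ‹_›
  linarith

lemma birgeFun_two_inv : birgeFun 2⁻¹ = log 2 := by
  rw [birgeFun, binEntropy_two_inv, show (1 : ℝ) - 2⁻¹ = 2⁻¹ by norm_num, log_inv]; ring

lemma two_inv_lt_of_birgeFun_neg {c : ℝ} (hc : c ∈ Ioo 0 1) (h : birgeFun c < 0) : 2⁻¹ < c := by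
  by_contra! hle
  have := birgeFun_antitoneOn hc ⟨by norm_num, by norm_num⟩ hle
  rw [birgeFun_two_inv] at this
  linarith [log_pos one_lt_two]

lemma mul_log_le_of_birgeFun_le {a m : ℝ} (ha : a ∈ Ioo 0 1) (hm : 0 < m)
    (h : birgeFun a ≤ log (m / (m + 1))) :
    a * log (m + 1) ≤ a * log (m / (1 - a)) - binEntropy a := by
  have h1a : 0 < 1 - a := by linarith [ha.2]
  rw [birgeFun, log_div hm.ne' (by linarith)] at h
  have := mul_le_mul_of_nonneg_left h ha.1.le
  rw [mul_add, mul_div_cancel₀ _ ha.1.ne'] at this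
  rw [log_div hm.ne' h1a.ne']
  linarith

open Finset

lemma sum_log_le_card_mul_log_sum_div_card {ι : Type*} {s : Finset ι} (hs : s.Nonempty)
    {q : ι → ℝ} (hq : ∀ i ∈ s, 0 < q i) :
    ∑ i ∈ s, log (q i) ≤ #s * log ((∑ i ∈ s, q i) / #s) := by
  have hcard : (0 : ℝ) < #s := by exact_mod_cast hs.card_pos
  have hJensen := strictConcaveOn_log_Ioi.concaveOn.le_map_sum (t := s)
    (w := fun _ => (#s : ℝ)⁻¹) (p := q) (fun _ _ => by positivity) (by simp [hcard.ne']) hq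
  simp only [smul_eq_mul] at hJensen
  rwa [← mul_sum, ← mul_sum, inv_mul_eq_div, inv_mul_eq_div, div_le_iff₀' hcard] at hJensen

lemma card_mul_mul_log_le_sum_mul_log_inv_sub_binEntropy {ι : Type*} {s : Finset ι}
    (hs : s.Nonempty) {q : ι → ℝ} (hq : ∀ i ∈ s, 0 < q i) {a c : ℝ} (hc : c ∈ Set.Ioo 0 1)
    (hca : c ≤ a) (hsum : ∑ i ∈ s, q i ≤ 1 - a) (h : birgeFun c ≤ log (#s / (#s + 1))) :
    #s * (a * log (#s + 1)) ≤ ∑ i ∈ s, (a * log (q i)⁻¹ - binEntropy a) := by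
  have hcard : (0 : ℝ) < #s := by exact_mod_cast hs.card_pos
  have hq_sum : 0 < ∑ i ∈ s, q i := sum_pos hq hs
  have ha : a ∈ Set.Ioo 0 1 := ⟨hc.1.trans_le hca, by linarith⟩
  calc (#s : ℝ) * (a * log (#s + 1))
      ≤ #s * (a * log (#s / (1 - a)) - binEntropy a) := by
        gcongr
        exact mul_log_le_of_birgeFun_le ha hcard ((birgeFun_antitoneOn hc ha hca).trans h)
    _ ≤ #s * (a * log (#s / ∑ i ∈ s, q i) - binEntropy a) := by
        gcongr
        · exact ha.1.le
        · exact div_pos hcard (by linarith [ha.2])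
    _ = a * -(#s * log ((∑ i ∈ s, q i) / #s)) - #s * binEntropy a := by
        rw [← inv_div, log_inv]; ring
    _ ≤ a * -∑ i ∈ s, log (q i) - #s * binEntropy a := by
        gcongr
        · exact ha.1.le
        · exact sum_log_le_card_mul_log_sum_div_card hs hq
    _ = ∑ i ∈ s, (a * log (q i)⁻¹ - binEntropy a) := by
        simp only [log_inv, sum_sub_distrib, sum_const, nsmul_eq_mul, mul_sum, mul_neg,
          sum_neg_distrib]

lemma sum_measureReal_le_one_sub {Ω ι : Type*} [MeasurableSpace Ω] {μ : Measure Ω}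
    [IsProbabilityMeasure μ] {A : ι → Set Ω} (hA : ∀ i, MeasurableSet (A i))
    (hdisj : Pairwise (Function.onFun Disjoint A)) {s : Finset ι} {i₀ : ι} (hi₀ : i₀ ∉ s) :
    ∑ i ∈ s, μ.real (A i) ≤ 1 - μ.real (A i₀) := by
  rw [le_sub_iff_add_le', ← sum_insert hi₀ (f := fun i => μ.real (A i)),
    ← measureReal_biUnion_finset (hdisj.set_pairwise _) fun i _ => hA i]
  exact measureReal_le_one

lemma ofReal_card_mul_mul_log_le_sum_KLdiv {Ω ι : Type*} [MeasurableSpace Ω]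
    (P : ι → Measure Ω) [∀ i, IsProbabilityMeasure (P i)] {A : ι → Set Ω}
    (hA : ∀ i, MeasurableSet (A i)) (hdisj : Pairwise (Function.onFun Disjoint A))
    {s : Finset ι} {i₀ : ι} (hi₀ : i₀ ∉ s) {a c : ℝ} (hc : c ∈ Set.Ioo 0 1) (hca : c ≤ a)
    (hPA : ∀ i, a ≤ (P i).real (A i)) (h : birgeFun c ≤ log (#s / (#s + 1))) :
    ENNReal.ofReal (#s * (a * log (#s + 1))) ≤ ∑ i ∈ s, KLdiv (P i) (P i₀) := by
  rcases s.eq_empty_or_nonempty with rfl | hs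
  · simp
  have hcard : (0 : ℝ) < #s := by exact_mod_cast hs.card_pos
  have ha : 2⁻¹ < a := (two_inv_lt_of_birgeFun_neg hc (h.trans_lt
    (log_neg (by positivity) ((div_lt_one (by positivity)).2 (lt_add_one _))))).trans_le hca
  by_cases hq : ∃ i ∈ s, P i₀ (A i) = 0
  · obtain ⟨i, hi, hqi⟩ := hq
    have hPi : P i (A i) ≠ 0 := fun h0 => by
      have := hPA i
      rw [Measure.real, h0, ENNReal.toReal_zero] at this
      linarith
    rw [ENNReal.sum_eq_top.2 ⟨i, hi, KLdiv_eq_top_of_measure_eq_zero hqi hPi⟩]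
    exact le_top
  have hq_pos : ∀ i ∈ s, 0 < (P i₀).real (A i) :=
    fun i hi => ENNReal.toReal_pos (fun h0 => hq ⟨i, hi, h0⟩) (measure_ne_top _ _)
  have hsum : ∑ i ∈ s, (P i₀).real (A i) ≤ 1 - a :=
    (sum_measureReal_le_one_sub hA hdisj hi₀).trans (by linarith [hPA i₀])
  calc ENNReal.ofReal (#s * (a * log (#s + 1)))
      ≤ ENNReal.ofReal (∑ i ∈ s, (a * log ((P i₀).real (A i))⁻¹ - binEntropy a)) :=
        ENNReal.ofReal_le_ofReal
          (card_mul_mul_log_le_sum_mul_log_inv_sub_binEntropy hs hq_pos hc hca hsum h)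
    _ ≤ ∑ i ∈ s, ENNReal.ofReal (a * log ((P i₀).real (A i))⁻¹ - binEntropy a) :=
        le_sum_of_subadditive _ ENNReal.ofReal_zero.le (fun _ _ => ENNReal.ofReal_add_le) _ _
    _ ≤ ∑ i ∈ s, KLdiv (P i) (P i₀) := sum_le_sum fun i hi =>
        (ENNReal.ofReal_le_ofReal (mul_log_inv_sub_binEntropy_le_binKL ha.le (hPA i)
          measureReal_le_one (hq_pos i hi) measureReal_le_one)).trans
        (ofReal_binKL_le_KLdiv _ _ (hA i))

lemma ofReal_le_mul_div_of_ofReal_mul_le {x y z : ℝ} (hy : 0 < y) (hz : 0 < z) {S : ℝ≥0∞}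
    (h : ENNReal.ofReal (y * (x * z)) ≤ S) :
    ENNReal.ofReal x ≤ ENNReal.ofReal (1 / y) * S / ENNReal.ofReal z := by
  rw [ENNReal.le_div_iff_mul_le (Or.inl (ENNReal.ofReal_pos.2 hz).ne')
    (Or.inl ENNReal.ofReal_ne_top), ← ENNReal.ofReal_mul' hz.le]
  calc ENNReal.ofReal (x * z) = ENNReal.ofReal (1 / y) * ENNReal.ofReal (y * (x * z)) := by
        rw [← ENNReal.ofReal_mul (by positivity)]
        field_simp
    _ ≤ ENNReal.ofReal (1 / y) * S := by gcongr

/-- Birgé's lemma: for a partition `A₁,…,A_N` and probability measures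
`P₁,…,P_N` (indexed here by `Fin N`, with `P 0` playing the role of `P₁`),
`min_i Pᵢ(Aᵢ) ≤ max{c, K̄/log N}` where
`K̄ = (1/(N−1))·Σ_{i≠1} KL(Pᵢ,P₁)` and `c` is the constant determined by the
stated equation. The inequality is stated in `[0,+∞]`, so that it is trivially
satisfied when `K̄ = +∞`. -/
theorem birge_lemma {Ω : Type*} [MeasurableSpace Ω] (N : ℕ) (hN : 2 ≤ N)
    (P : Fin N → Measure Ω) [∀ i, IsProbabilityMeasure (P i)]
    (A : Fin N → Set Ω) (hA : ∀ i, MeasurableSet (A i))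
    (hdisj : Pairwise (Function.onFun Disjoint A))
    (c : ℝ) (hc : c ∈ Set.Ioo (0 : ℝ) 1)
    (hceq : -(c * Real.log c + (1 - c) * Real.log (1 - c)) / c + Real.log (1 - c)
      = Real.log ((N - 1 : ℝ) / N)) :
    (⨅ i, P i (A i)) ≤
      max (ENNReal.ofReal c)
        ((ENNReal.ofReal (1 / (N - 1 : ℝ)) *
            ∑ i ∈ Finset.univ.filter (fun i : Fin N => i ≠ ⟨0, by omega⟩), KLdiv (P i) (P ⟨0, by omega⟩)) /
          ENNReal.ofReal (Real.log N)) := by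
  set i₀ : Fin N := ⟨0, by omega⟩
  set T := univ.filter fun i : Fin N => i ≠ i₀
  have hT : (#T : ℝ) = N - 1 := by
    rw [show T = univ.erase i₀ from filter_ne' _ _, card_erase_of_mem (mem_univ _), card_univ,
      Fintype.card_fin, Nat.cast_sub (by omega), Nat.cast_one]
  have : Nonempty (Fin N) := ⟨i₀⟩
  obtain ⟨j, hj⟩ := Finite.exists_min fun i => P i (A i)
  refine (iInf_le _ j).trans ?_
  rcases le_or_gt (P j (A j)) (ENNReal.ofReal c) with hle | hlt
  · exact hle.trans (le_max_left _ _)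
  refine le_max_of_le_right ?_
  have hca : c < (P j).real (A j) :=
    (ENNReal.ofReal_lt_iff_lt_toReal hc.1.le (measure_ne_top _ _)).1 hlt
  have hGc : birgeFun c = log (#T / (#T + 1)) := by
    rw [hT, sub_add_cancel, ← hceq, birgeFun, binEntropy, log_inv, log_inv]
    ring
  have key := ofReal_card_mul_mul_log_le_sum_KLdiv P hA hdisj (s := T) (i₀ := i₀) (by simp [T])
    hc hca.le (fun i => ENNReal.toReal_mono (measure_ne_top _ _) (hj i)) hGc.le
  rw [hT, sub_add_cancel] at key
  rw [← ENNReal.ofReal_toReal (measure_ne_top (P j) (A j))]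
  exact ofReal_le_mul_div_of_ofReal_mul_le (by linarith [show (2 : ℝ) ≤ N by exact_mod_cast hN])
    (log_pos (by exact_mod_cast hN)) key
end
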